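/- arXiv:1309.7910 — 6 statements merged into one kernel-verified Lean document; each statement's English description precedes it below -/
import Mathlib

section
/- For any fixed integer w ≥ 1 and any η > 0, there exists N₀ < ∞ such that for all N > N₀, the limit x^{(∞)} of the coupled recursion satisfies max_{i∈[1:M]} x_i^{(∞)} + η ≥ x̲*, where x̲* = min{x ∈ X : U_s(x) = min_{z∈X} U_s(z)}. -/
/-
If every component of the limit `x^∞` stayed below `x̲* − η`, each would pay an energy gap `δ > 0`
in the single-system potential `U_s`, so `∑ U_s(x^∞_i) ≥ M (U_s(x̲*) + δ)`. On the other hand the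
coupled potential `U(x) = ∑ (x_i g(x_i) − G(x_i)) − ∑ F([A g(x)]_j)` is a Lyapunov function of `h`
(tangent-line inequalities for the convex primitives `F`, `G`, and the duality
`⟨f(y), A v⟩ = ⟨Aᵀ f(y), v⟩`), and it dominates `∑ U_s(x_i)` by Jensen's inequality for `F` along
the rows of `A`. The iterates of `h` from the constant profile `x̲*` are squeezed between `x^∞` and
the iterates from `x_max`, hence converge to `x^∞`, so
`∑ U_s(x^∞_i) ≤ U(x̲* 1) = M U_s(x̲*) + (M − N) F(g(x̲*))`. Thus `M δ ≤ (w − 1) F(g(x̲*))`, which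
fails once `N > (w − 1) F(g(x̲*)) / δ`.
-/

open Set Filter

/-- The coupling matrix `A` of size `N × M` with `M = N + w − 1`. -/
noncomputable def Amat (w N : ℕ) (j : Fin N) (k : Fin (N + w - 1)) : ℝ :=
  if (j : ℕ) ≤ (k : ℕ) ∧ (k : ℕ) < (j : ℕ) + w then (w : ℝ)⁻¹ else 0

/-- The coupled update `h(x) = Aᵀ f(A g(x))`. -/
noncomputable def coupledMap (w N : ℕ) (f g : ℝ → ℝ)
    (x : Fin (N + w - 1) → ℝ) : Fin (N + w - 1) → ℝ :=
  fun i => ∑ j : Fin N, Amat w N j i * f (∑ k, Amat w N j k * g (x k))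

/-- The coupled recursion initialized at `x_max·1`. -/
noncomputable def coupledSeq (w N : ℕ) (f g : ℝ → ℝ) (xmax : ℝ) :
    ℕ → Fin (N + w - 1) → ℝ
  | 0 => fun _ => xmax
  | ℓ + 1 => coupledMap w N f g (coupledSeq w N f g xmax ℓ)

open Topology Finset Matrix

theorem MonotoneOn.mul_sub_le_intervalIntegral {φ : ℝ → ℝ} {a b : ℝ}
    (hφ : MonotoneOn φ (uIcc a b)) : φ a * (b - a) ≤ ∫ z in a..b, φ z := by
  have hint := hφ.intervalIntegrable (μ := MeasureTheory.volume)
  rcases le_total a b with hab | hba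
  · rw [uIcc_of_le hab] at hφ
    have := intervalIntegral.integral_mono_on hab intervalIntegrable_const hint
      fun z hz => hφ (left_mem_Icc.2 hab) hz hz.1
    simpa [mul_comm] using this
  · rw [uIcc_of_ge hba] at hφ
    have := intervalIntegral.integral_mono_on hba hint.symm intervalIntegrable_const
      fun z hz => hφ hz (right_mem_Icc.2 hba) hz.2
    rw [intervalIntegral.integral_symm]
    simp only [intervalIntegral.integral_const, smul_eq_mul] at this
    linarith

theorem MonotoneOn.mul_sub_le_integral_sub {φ : ℝ → ℝ} {d a b : ℝ}
    (hφ : MonotoneOn φ (Icc 0 d)) (ha : a ∈ Icc 0 d) (hb : b ∈ Icc 0 d) :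
    φ a * (b - a) ≤ (∫ z in (0:ℝ)..b, φ z) - ∫ z in (0:ℝ)..a, φ z := by
  have h0 : (0:ℝ) ∈ Icc 0 d := ⟨le_rfl, ha.1.trans ha.2⟩
  have hint : ∀ c ∈ Icc 0 d, IntervalIntegrable φ MeasureTheory.volume 0 c := fun c hc =>
    (hφ.mono (uIcc_subset_Icc h0 hc)).intervalIntegrable
  rw [intervalIntegral.integral_interval_sub_left (hint b hb) (hint a ha)]
  exact (hφ.mono (uIcc_subset_Icc ha hb)).mul_sub_le_intervalIntegral

theorem ContinuousOn.continuousOn_primitive {φ : ℝ → ℝ} {d : ℝ} (hφ : ContinuousOn φ (Icc 0 d)) :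
    ContinuousOn (fun t => ∫ z in (0:ℝ)..t, φ z) (Icc 0 d) := by
  rcases le_or_gt 0 d with hd | hd
  · rw [← uIcc_of_le hd] at hφ ⊢
    exact intervalIntegral.continuousOn_primitive_interval hφ.integrableOn_uIcc
  · simp [Icc_eq_empty_of_lt hd]

theorem map_sum_le_of_subgradient {κ : Type*} [Fintype κ] {Φ φ : ℝ → ℝ} {S : Set ℝ}
    (hsub : ∀ a ∈ S, ∀ b ∈ S, φ a * (b - a) ≤ Φ b - Φ a) {w p : κ → ℝ} (hw : 0 ≤ w)
    (hw1 : ∑ k, w k = 1) (hp : ∀ k, p k ∈ S) (hc : ∑ k, w k * p k ∈ S) :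
    Φ (∑ k, w k * p k) ≤ ∑ k, w k * Φ (p k) := by
  set c := ∑ k, w k * p k
  have hcentered : ∑ k, w k * (p k - c) = 0 := by
    simp only [mul_sub, sum_sub_distrib, ← sum_mul, hw1, one_mul, c, sub_self]
  calc Φ c = ∑ k, w k * Φ c + φ c * ∑ k, w k * (p k - c) := by
        rw [hcentered, ← sum_mul, hw1]; ring
    _ = ∑ k, w k * (Φ c + φ c * (p k - c)) := by
        rw [mul_sum, ← sum_add_distrib]; exact sum_congr rfl fun k _ => by ring
    _ ≤ ∑ k, w k * Φ (p k) := sum_le_sum fun k _ =>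
        mul_le_mul_of_nonneg_left (by linarith [hsub c hc (p k) (hp k)]) (hw k)

theorem exists_gap_below_least_minimizer {U : ℝ → ℝ} {s : Set ℝ} {x₀ η : ℝ}
    (hs : IsCompact s) (hU : ContinuousOn U s) (hmin : ∀ z ∈ s, U x₀ ≤ U z)
    (hleast : ∀ x ∈ s, (∀ z ∈ s, U x ≤ U z) → x₀ ≤ x) (hη : 0 < η) :
    ∃ δ > 0, ∀ t ∈ s, t ≤ x₀ - η → U x₀ + δ ≤ U t := by
  obtain hempty | ⟨t₀, ht₀⟩ := (s ∩ Iic (x₀ - η)).eq_empty_or_nonempty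
  · refine ⟨1, one_pos, fun t ht htη => ?_⟩
    exact absurd (hempty ▸ ⟨ht, htη⟩ : t ∈ (∅ : Set ℝ)) (notMem_empty t)
  obtain ⟨z₀, hz₀, hz₀min⟩ := (hs.inter_right isClosed_Iic).exists_isMinOn ⟨t₀, ht₀⟩
    (hU.mono inter_subset_left)
  have hgap : U x₀ < U z₀ := by
    refine (hmin z₀ hz₀.1).lt_of_ne fun heq => ?_
    have := hleast z₀ hz₀.1 fun z hz => heq ▸ hmin z hz
    linarith [hz₀.2.out]
  exact ⟨U z₀ - U x₀, by linarith, fun t ht htη => by linarith [isMinOn_iff.1 hz₀min t ⟨ht, htη⟩]⟩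

section Iteration

variable {κ : Type*} {T : (κ → ℝ) → κ → ℝ} {s : Set (κ → ℝ)}

theorem isFixedPt_of_tendsto_iterate_of_continuousOn {a b : κ → ℝ} (hs : IsClosed s)
    (hmaps : MapsTo T s s) (hT : ContinuousOn T s) (ha : a ∈ s)
    (hlim : Tendsto (fun n => T^[n] a) atTop (𝓝 b)) : T b = b := by
  have hmem : ∀ n, T^[n] a ∈ s := fun n => hmaps.iterate n ha
  have hb : b ∈ s := hs.mem_of_tendsto hlim (Eventually.of_forall hmem)
  have hT_lim : Tendsto (fun n => T (T^[n] a)) atTop (𝓝 (T b)) :=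
    (hT b hb).tendsto.comp (tendsto_nhdsWithin_iff.2 ⟨hlim, Eventually.of_forall hmem⟩)
  refine tendsto_nhds_unique hT_lim ?_
  simpa only [Function.comp_def, Function.iterate_succ_apply'] using
    hlim.comp (tendsto_add_atTop_nat 1)

theorem le_of_tendsto_iterate_of_le {V : (κ → ℝ) → ℝ} {a b z : κ → ℝ} (hs : IsClosed s)
    (hmaps : MapsTo T s s) (hmono : MonotoneOn T s) (hT : ContinuousOn T s)
    (hV : ContinuousOn V s) (hVT : ∀ x ∈ s, V (T x) ≤ V x) (ha : a ∈ s) (hz : z ∈ s)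
    (hbz : b ≤ z) (hza : z ≤ a) (hlim : Tendsto (fun n => T^[n] a) atTop (𝓝 b)) :
    V b ≤ V z := by
  have hb : b ∈ s := hs.mem_of_tendsto hlim (Eventually.of_forall fun n => hmaps.iterate n ha)
  have hfix := isFixedPt_of_tendsto_iterate_of_continuousOn hs hmaps hT ha hlim
  have hbetween : ∀ n, b ≤ T^[n] z ∧ T^[n] z ≤ T^[n] a := by
    intro n
    induction n with
    | zero => exact ⟨hbz, hza⟩
    | succ n ih =>
      simp only [Function.iterate_succ_apply']
      exact ⟨hfix ▸ hmono hb (hmaps.iterate n hz) ih.1,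
        hmono (hmaps.iterate n hz) (hmaps.iterate n ha) ih.2⟩
  have hlim_z : Tendsto (fun n => T^[n] z) atTop (𝓝 b) := tendsto_pi_nhds.2 fun k =>
    tendsto_of_tendsto_of_tendsto_of_le_of_le tendsto_const_nhds (tendsto_pi_nhds.1 hlim k)
      (fun n => (hbetween n).1 k) (fun n => (hbetween n).2 k)
  have hdecr : ∀ n, V (T^[n] z) ≤ V z := by
    intro n
    induction n with
    | zero => exact le_rfl
    | succ n ih =>
      rw [Function.iterate_succ_apply']
      exact (hVT _ (hmaps.iterate n hz)).trans ih
  exact le_of_tendsto ((hV b hb).tendsto.comp (tendsto_nhdsWithin_iff.2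
    ⟨hlim_z, Eventually.of_forall fun n => hmaps.iterate n hz⟩)) (Eventually.of_forall hdecr)

end Iteration

structure IsCouplingMatrix {ι κ : Type*} [Fintype ι] [Fintype κ] (A : Matrix ι κ ℝ) : Prop where
  nonneg : ∀ j k, 0 ≤ A j k
  row_sum : ∀ j, ∑ k, A j k = 1
  col_sum_le : ∀ k, ∑ j, A j k ≤ 1

namespace IsCouplingMatrix

variable {ι κ : Type*} [Fintype ι] [Fintype κ] {A : Matrix ι κ ℝ}

theorem mulVec_mem_Icc (hA : IsCouplingMatrix A) {v : κ → ℝ} {c : ℝ} (hv : ∀ k, v k ∈ Icc 0 c)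
    (j : ι) : (A *ᵥ v) j ∈ Icc 0 c := by
  refine ⟨sum_nonneg fun k _ => mul_nonneg (hA.nonneg j k) (hv k).1, ?_⟩
  calc ∑ k, A j k * v k ≤ ∑ k, A j k * c :=
        sum_le_sum fun k _ => mul_le_mul_of_nonneg_left (hv k).2 (hA.nonneg j k)
    _ = c := by rw [← sum_mul, hA.row_sum, one_mul]

theorem transpose_mulVec_mem_Icc (hA : IsCouplingMatrix A) {u : ι → ℝ} {c : ℝ} (hc : 0 ≤ c)
    (hu : ∀ j, u j ∈ Icc 0 c) (k : κ) : (Aᵀ *ᵥ u) k ∈ Icc 0 c := by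
  refine ⟨sum_nonneg fun j _ => mul_nonneg (hA.nonneg j k) (hu j).1, ?_⟩
  calc ∑ j, A j k * u j ≤ ∑ j, A j k * c :=
        sum_le_sum fun j _ => mul_le_mul_of_nonneg_left (hu j).2 (hA.nonneg j k)
    _ ≤ c := by rw [← sum_mul]; exact mul_le_of_le_one_left hc (hA.col_sum_le k)

theorem mulVec_le_mulVec (hA : IsCouplingMatrix A) {v v' : κ → ℝ} (h : v ≤ v') :
    A *ᵥ v ≤ A *ᵥ v' := fun j =>
  sum_le_sum fun k _ => mul_le_mul_of_nonneg_left (h k) (hA.nonneg j k)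

theorem transpose_mulVec_le_mulVec (hA : IsCouplingMatrix A) {u u' : ι → ℝ} (h : u ≤ u') :
    Aᵀ *ᵥ u ≤ Aᵀ *ᵥ u' := fun k =>
  sum_le_sum fun j _ => mul_le_mul_of_nonneg_left (h j) (hA.nonneg j k)

theorem mulVec_const (hA : IsCouplingMatrix A) (a : ℝ) : A *ᵥ (fun _ => a) = fun _ => a := by
  ext j
  simp only [mulVec, dotProduct, ← sum_mul, hA.row_sum, one_mul]

theorem sum_mulVec_le (hA : IsCouplingMatrix A) {u : κ → ℝ} (hu : 0 ≤ u) :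
    ∑ j, (A *ᵥ u) j ≤ ∑ k, u k := by
  simp only [mulVec, dotProduct]
  rw [sum_comm]
  refine sum_le_sum fun k _ => ?_
  rw [← sum_mul]
  exact mul_le_of_le_one_left (hu k) (hA.col_sum_le k)

end IsCouplingMatrix

theorem ContinuousOn.mulVec_comp {ι κ : Type*} [Fintype κ] {A : Matrix ι κ ℝ} {g : ℝ → ℝ}
    {xmax : ℝ} (hg : ContinuousOn g (Icc 0 xmax)) :
    ContinuousOn (fun x : κ → ℝ => A *ᵥ (g ∘ x)) (univ.pi fun _ => Icc 0 xmax) :=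
  (continuous_const.matrix_mulVec continuous_id).comp_continuousOn <| continuousOn_pi.2 fun k =>
    hg.comp (continuous_apply k).continuousOn fun _ hx => mem_univ_pi.1 hx k

section CoupledSystem

variable {ι κ : Type*} [Fintype ι] [Fintype κ]

def coupledUpdate (A : Matrix ι κ ℝ) (f g : ℝ → ℝ) (x : κ → ℝ) : κ → ℝ :=
  Aᵀ *ᵥ (f ∘ (A *ᵥ (g ∘ x)))

noncomputable def coupledPotential (A : Matrix ι κ ℝ) (f g : ℝ → ℝ) (x : κ → ℝ) : ℝ :=
  ∑ k, (x k * g (x k) - ∫ z in (0:ℝ)..x k, g z) - ∑ j, ∫ z in (0:ℝ)..(A *ᵥ (g ∘ x)) j, f z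

noncomputable def singlePotential (f g : ℝ → ℝ) (x : ℝ) : ℝ :=
  x * g x - (∫ z in (0:ℝ)..x, g z) - ∫ z in (0:ℝ)..g x, f z

variable {A : Matrix ι κ ℝ} {f g : ℝ → ℝ} {xmax ymax : ℝ}

theorem continuousOn_singlePotential (hf : ContinuousOn f (Icc 0 ymax))
    (hg_maps : MapsTo g (Icc 0 xmax) (Icc 0 ymax))
    (hg : ContinuousOn g (Icc 0 xmax)) : ContinuousOn (singlePotential f g) (Icc 0 xmax) :=
  ((continuousOn_id.mul hg).sub hg.continuousOn_primitive).sub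
    (hf.continuousOn_primitive.comp hg hg_maps)

namespace IsCouplingMatrix

theorem mulVec_comp_mem_Icc (hA : IsCouplingMatrix A) (hg : MapsTo g (Icc 0 xmax) (Icc 0 ymax))
    {x : κ → ℝ} (hx : x ∈ univ.pi fun _ => Icc 0 xmax) (j : ι) :
    (A *ᵥ (g ∘ x)) j ∈ Icc 0 ymax :=
  hA.mulVec_mem_Icc (fun k => hg (mem_univ_pi.1 hx k)) j

theorem mapsTo_coupledUpdate (hA : IsCouplingMatrix A) (hf : MapsTo f (Icc 0 ymax) (Icc 0 xmax))
    (hg : MapsTo g (Icc 0 xmax) (Icc 0 ymax)) (hxmax : 0 ≤ xmax) :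
    MapsTo (coupledUpdate A f g) (univ.pi fun _ => Icc 0 xmax) (univ.pi fun _ => Icc 0 xmax) :=
  fun _ hx => mem_univ_pi.2 <|
    hA.transpose_mulVec_mem_Icc hxmax fun j => hf (hA.mulVec_comp_mem_Icc hg hx j)

theorem monotoneOn_coupledUpdate (hA : IsCouplingMatrix A) (hf : MonotoneOn f (Icc 0 ymax))
    (hg_maps : MapsTo g (Icc 0 xmax) (Icc 0 ymax)) (hg : MonotoneOn g (Icc 0 xmax)) :
    MonotoneOn (coupledUpdate A f g) (univ.pi fun _ => Icc 0 xmax) :=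
  fun _ hx _ hx' hle => hA.transpose_mulVec_le_mulVec fun j =>
    hf (hA.mulVec_comp_mem_Icc hg_maps hx j) (hA.mulVec_comp_mem_Icc hg_maps hx' j) <|
      hA.mulVec_le_mulVec (fun k => hg (mem_univ_pi.1 hx k) (mem_univ_pi.1 hx' k) (hle k)) j

theorem continuousOn_coupledUpdate (hA : IsCouplingMatrix A) (hf : ContinuousOn f (Icc 0 ymax))
    (hg_maps : MapsTo g (Icc 0 xmax) (Icc 0 ymax)) (hg : ContinuousOn g (Icc 0 xmax)) :
    ContinuousOn (coupledUpdate A f g) (univ.pi fun _ => Icc 0 xmax) :=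
  (continuous_const.matrix_mulVec continuous_id).comp_continuousOn <| continuousOn_pi.2 fun j =>
    hf.comp ((continuous_apply j).comp_continuousOn hg.mulVec_comp)
      fun _ hx => hA.mulVec_comp_mem_Icc hg_maps hx j

theorem continuousOn_coupledPotential (hA : IsCouplingMatrix A)
    (hf : ContinuousOn f (Icc 0 ymax)) (hg_maps : MapsTo g (Icc 0 xmax) (Icc 0 ymax))
    (hg : ContinuousOn g (Icc 0 xmax)) :
    ContinuousOn (coupledPotential A f g) (univ.pi fun _ => Icc 0 xmax) := by
  have hcoord : ∀ k, MapsTo (fun x : κ → ℝ => x k) (univ.pi fun _ => Icc 0 xmax) (Icc 0 xmax) :=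
    fun k _ hx => mem_univ_pi.1 hx k
  refine (continuousOn_finsetSum _ fun k _ => ?_).sub (continuousOn_finsetSum _ fun j _ => ?_)
  · exact ((continuous_apply k).continuousOn.mul (hg.comp (continuous_apply k).continuousOn
      (hcoord k))).sub (hg.continuousOn_primitive.comp (continuous_apply k).continuousOn (hcoord k))
  · exact hf.continuousOn_primitive.comp ((continuous_apply j).comp_continuousOn hg.mulVec_comp)
      fun _ hx => hA.mulVec_comp_mem_Icc hg_maps hx j

theorem coupledPotential_coupledUpdate_le (hA : IsCouplingMatrix A)
    (hf_maps : MapsTo f (Icc 0 ymax) (Icc 0 xmax)) (hf_mono : MonotoneOn f (Icc 0 ymax))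
    (hg_maps : MapsTo g (Icc 0 xmax) (Icc 0 ymax)) (hg_mono : MonotoneOn g (Icc 0 xmax))
    (hxmax : 0 ≤ xmax) {x : κ → ℝ} (hx : x ∈ univ.pi fun _ => Icc 0 xmax) :
    coupledPotential A f g (coupledUpdate A f g x) ≤ coupledPotential A f g x := by
  have hx' := hA.mapsTo_coupledUpdate hf_maps hg_maps hxmax hx
  set x' := coupledUpdate A f g x
  set y := A *ᵥ (g ∘ x)
  set y' := A *ᵥ (g ∘ x')
  have hdual : ∑ j, f (y j) * (y' j - y j) = ∑ k, x' k * (g (x' k) - g (x k)) := by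
    change (f ∘ y) ⬝ᵥ (y' - y) = x' ⬝ᵥ (g ∘ x' - g ∘ x)
    rw [← mulVec_sub, dotProduct_mulVec, ← mulVec_transpose]
    rfl
  have hx_part : ∑ k, (x' k * g (x' k) - ∫ z in (0:ℝ)..x' k, g z)
      - ∑ k, (x k * g (x k) - ∫ z in (0:ℝ)..x k, g z) ≤ ∑ k, x' k * (g (x' k) - g (x k)) := by
    rw [← sum_sub_distrib]
    refine sum_le_sum fun k _ => ?_
    linarith [hg_mono.mul_sub_le_integral_sub (mem_univ_pi.1 hx k) (mem_univ_pi.1 hx' k)]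
  have hy_part : ∑ k, x' k * (g (x' k) - g (x k))
      ≤ ∑ j, (∫ z in (0:ℝ)..y' j, f z) - ∑ j, ∫ z in (0:ℝ)..y j, f z := by
    rw [← hdual, ← sum_sub_distrib]
    exact sum_le_sum fun j _ => hf_mono.mul_sub_le_integral_sub
      (hA.mulVec_comp_mem_Icc hg_maps hx j) (hA.mulVec_comp_mem_Icc hg_maps hx' j)
  simp only [coupledPotential]
  linarith

theorem sum_singlePotential_le_coupledPotential (hA : IsCouplingMatrix A)
    (hf_maps : MapsTo f (Icc 0 ymax) (Icc 0 xmax)) (hf_mono : MonotoneOn f (Icc 0 ymax))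
    (hg_maps : MapsTo g (Icc 0 xmax) (Icc 0 ymax)) {x : κ → ℝ}
    (hx : x ∈ univ.pi fun _ => Icc 0 xmax) :
    ∑ k, singlePotential f g (x k) ≤ coupledPotential A f g x := by
  set F : ℝ → ℝ := fun t => ∫ z in (0:ℝ)..t, f z
  have hgx : ∀ k, g (x k) ∈ Icc 0 ymax := fun k => hg_maps (mem_univ_pi.1 hx k)
  have hF_nonneg : 0 ≤ F ∘ g ∘ x := fun k => intervalIntegral.integral_nonneg (hgx k).1
    fun u hu => (hf_maps ⟨hu.1, hu.2.trans (hgx k).2⟩).1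
  have hjensen : ∀ j, F ((A *ᵥ (g ∘ x)) j) ≤ (A *ᵥ (F ∘ g ∘ x)) j := fun j =>
    map_sum_le_of_subgradient (fun _ ha _ hb => hf_mono.mul_sub_le_integral_sub ha hb)
      (hA.nonneg j) (hA.row_sum j) hgx (hA.mulVec_comp_mem_Icc hg_maps hx j)
  have hF_sum : ∑ j, F ((A *ᵥ (g ∘ x)) j) ≤ ∑ k, F (g (x k)) :=
    (sum_le_sum fun j _ => hjensen j).trans (hA.sum_mulVec_le hF_nonneg)
  simp only [singlePotential, coupledPotential, sum_sub_distrib]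
  linarith

theorem coupledPotential_const (hA : IsCouplingMatrix A) (c : ℝ) :
    coupledPotential A f g (fun _ => c) = Fintype.card κ * (c * g c - ∫ z in (0:ℝ)..c, g z)
      - Fintype.card ι * ∫ z in (0:ℝ)..g c, f z := by
  simp only [coupledPotential, Function.comp_def, hA.mulVec_const, sum_const, card_univ,
    nsmul_eq_mul]

theorem mem_of_tendsto_iterate (hA : IsCouplingMatrix A)
    (hf_maps : MapsTo f (Icc 0 ymax) (Icc 0 xmax)) (hg_maps : MapsTo g (Icc 0 xmax) (Icc 0 ymax))
    (hxmax : 0 ≤ xmax) {xinf : κ → ℝ}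
    (hlim : Tendsto (fun n => (coupledUpdate A f g)^[n] fun _ => xmax) atTop (𝓝 xinf)) :
    xinf ∈ univ.pi fun _ => Icc 0 xmax :=
  (isClosed_set_pi fun _ _ => isClosed_Icc).mem_of_tendsto hlim <| Eventually.of_forall fun n =>
    (hA.mapsTo_coupledUpdate hf_maps hg_maps hxmax).iterate n <|
      mem_univ_pi.2 fun _ => ⟨hxmax, le_rfl⟩

theorem sum_singlePotential_le_of_tendsto (hA : IsCouplingMatrix A)
    (hf_maps : MapsTo f (Icc 0 ymax) (Icc 0 xmax)) (hf_mono : MonotoneOn f (Icc 0 ymax))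
    (hf_cont : ContinuousOn f (Icc 0 ymax)) (hg_maps : MapsTo g (Icc 0 xmax) (Icc 0 ymax))
    (hg_mono : MonotoneOn g (Icc 0 xmax)) (hg_cont : ContinuousOn g (Icc 0 xmax))
    {c : ℝ} (hc : c ∈ Icc 0 xmax) {xinf : κ → ℝ}
    (hlim : Tendsto (fun n => (coupledUpdate A f g)^[n] fun _ => xmax) atTop (𝓝 xinf))
    (hle : xinf ≤ fun _ => c) :
    ∑ k, singlePotential f g (xinf k) ≤ Fintype.card κ * singlePotential f g c
      + (Fintype.card κ - Fintype.card ι) * ∫ z in (0:ℝ)..g c, f z := by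
  have hxmax : 0 ≤ xmax := hc.1.trans hc.2
  have hbox : IsClosed (univ.pi fun _ : κ => Icc 0 xmax) :=
    isClosed_set_pi fun _ _ => isClosed_Icc
  have hmaps := hA.mapsTo_coupledUpdate hf_maps hg_maps hxmax
  have hcont := hA.continuousOn_coupledUpdate hf_cont hg_maps hg_cont
  have htop : (fun _ => xmax) ∈ univ.pi fun _ : κ => Icc 0 xmax :=
    mem_univ_pi.2 fun _ => ⟨hxmax, le_rfl⟩
  have hxinf := hA.mem_of_tendsto_iterate hf_maps hg_maps hxmax hlim
  calc ∑ k, singlePotential f g (xinf k)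
      ≤ coupledPotential A f g xinf :=
        hA.sum_singlePotential_le_coupledPotential hf_maps hf_mono hg_maps hxinf
    _ ≤ coupledPotential A f g (fun _ => c) :=
        le_of_tendsto_iterate_of_le hbox hmaps (hA.monotoneOn_coupledUpdate hf_mono hg_maps hg_mono)
          hcont (hA.continuousOn_coupledPotential hf_cont hg_maps hg_cont)
          (fun _ hx =>
            hA.coupledPotential_coupledUpdate_le hf_maps hf_mono hg_maps hg_mono hxmax hx)
          htop (mem_univ_pi.2 fun _ => hc) hle (fun _ => hc.2) hlim
    _ = _ := by rw [hA.coupledPotential_const, singlePotential]; ring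

end IsCouplingMatrix

end CoupledSystem

theorem isCouplingMatrix_Amat {w N : ℕ} (hw : 1 ≤ w) : IsCouplingMatrix (Matrix.of (Amat w N)) := by
  have hw0 : (w : ℝ) ≠ 0 := by positivity
  refine ⟨fun j k => ?_, fun j => ?_, fun k => ?_⟩
  · simp only [Matrix.of_apply, Amat]
    split <;> positivity
  · simp only [Matrix.of_apply, Amat]
    rw [Fin.sum_univ_eq_sum_range (fun m => if (j : ℕ) ≤ m ∧ m < j + w then (w : ℝ)⁻¹ else 0),
      ← sum_filter, sum_const, nsmul_eq_mul]
    have hwindow : (range (N + w - 1)).filter (fun m => (j : ℕ) ≤ m ∧ m < j + w)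
        = Finset.Ico (j : ℕ) (j + w) := by
      ext m; simp only [mem_filter, Finset.mem_range, Finset.mem_Ico]; omega
    rw [hwindow, Nat.card_Ico, Nat.add_sub_cancel_left, mul_inv_cancel₀ hw0]
  · simp only [Matrix.of_apply, Amat]
    rw [Fin.sum_univ_eq_sum_range (fun m => if m ≤ (k : ℕ) ∧ (k : ℕ) < m + w then (w : ℝ)⁻¹ else 0),
      ← sum_filter, sum_const, nsmul_eq_mul, ← mul_inv_cancel₀ hw0]
    have hwindow : ((range N).filter fun m => m ≤ (k : ℕ) ∧ (k : ℕ) < m + w).card ≤ w :=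
      calc _ ≤ (Finset.Ico (k + 1 - w) (k + 1)).card := Finset.card_le_card fun m hm => by
            simp only [mem_filter, Finset.mem_range, Finset.mem_Ico] at hm ⊢; omega
        _ ≤ w := by rw [Nat.card_Ico]; omega
    gcongr

theorem coupledSeq_eq_iterate (w N : ℕ) (f g : ℝ → ℝ) (xmax : ℝ) (ℓ : ℕ) :
    coupledSeq w N f g xmax ℓ = (coupledUpdate (Matrix.of (Amat w N)) f g)^[ℓ] fun _ => xmax := by
  induction ℓ with
  | zero => rfl
  | succ ℓ ih => rw [Function.iterate_succ_apply', ← ih]; rfl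

theorem stmt_1_general
    (xmax ymax : ℝ)
    (f g : ℝ → ℝ)
    (hf_maps : Set.MapsTo f (Set.Icc 0 ymax) (Set.Icc 0 xmax))
    (hf_mono : MonotoneOn f (Set.Icc 0 ymax))
    (hf_C1 : ContDiffOn ℝ 1 f (Set.Icc 0 ymax))
    (hg_maps : Set.MapsTo g (Set.Icc 0 xmax) (Set.Icc 0 ymax))
    (hg_strict : StrictMonoOn g (Set.Icc 0 xmax))
    (hg_C2 : ContDiffOn ℝ 2 g (Set.Icc 0 xmax))
    (Us : ℝ → ℝ)
    (hUs : ∀ x : ℝ, Us x = x * g x - (∫ z in (0:ℝ)..x, g z) - ∫ z in (0:ℝ)..(g x), f z)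
    (xund : ℝ) (hxund_mem : xund ∈ Set.Icc 0 xmax)
    (hxund_min : ∀ z ∈ Set.Icc 0 xmax, Us xund ≤ Us z)
    (hxund_least : ∀ x ∈ Set.Icc 0 xmax, (∀ z ∈ Set.Icc 0 xmax, Us x ≤ Us z) → xund ≤ x)
    (w : ℕ) (hw : 1 ≤ w) (η : ℝ) (hη : 0 < η) :
    ∃ N₀ : ℕ, ∀ N : ℕ, N₀ < N →
      ∀ xinf : Fin (N + w - 1) → ℝ,
        (∀ i, Tendsto (fun ℓ => coupledSeq w N f g xmax ℓ i) atTop (nhds (xinf i))) →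
        ∃ i, xund ≤ xinf i + η := by
  obtain rfl : Us = singlePotential f g := funext hUs
  have hxmax : 0 ≤ xmax := hxund_mem.1.trans hxund_mem.2
  have hf_cont := hf_C1.continuousOn
  have hg_cont := hg_C2.continuousOn
  obtain ⟨δ, hδ, hgap⟩ := exists_gap_below_least_minimizer isCompact_Icc
    (continuousOn_singlePotential hf_cont hg_maps hg_cont) hxund_min hxund_least hη
  refine ⟨⌈(w - 1 : ℝ) * (∫ z in (0:ℝ)..g xund, f z) / δ⌉₊, fun N hN xinf hlim => ?_⟩
  by_contra! hfar
  have hA := isCouplingMatrix_Amat (N := N) hw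
  have hlim' : Tendsto (fun n => (coupledUpdate (Matrix.of (Amat w N)) f g)^[n] fun _ => xmax)
      atTop (𝓝 xinf) := by
    simpa only [← coupledSeq_eq_iterate] using tendsto_pi_nhds.2 hlim
  have hxinf := hA.mem_of_tendsto_iterate hf_maps hg_maps hxmax hlim'
  have hupper := hA.sum_singlePotential_le_of_tendsto hf_maps hf_mono hf_cont hg_maps
    hg_strict.monotoneOn hg_cont hxund_mem hlim' fun i => by linarith [hfar i]
  have hlower : ∑ i, (singlePotential f g xund + δ) ≤ ∑ i, singlePotential f g (xinf i) :=
    sum_le_sum fun i _ => hgap _ (mem_univ_pi.1 hxinf i) (by linarith [hfar i])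
  have hM : ((N + w - 1 : ℕ) : ℝ) = N + w - 1 := by
    rw [Nat.cast_sub (by omega), Nat.cast_add, Nat.cast_one]
  have hN' := (Nat.le_ceil _).trans_lt (Nat.cast_lt.2 hN)
  rw [div_lt_iff₀ hδ] at hN'
  simp only [sum_const, card_univ, Fintype.card_fin, nsmul_eq_mul, hM] at hupper hlower
  nlinarith [mul_nonneg (sub_nonneg.2 (Nat.one_le_cast.2 hw : (1 : ℝ) ≤ w)) hδ.le]

/-- **Theorem 2 (main_scalar_lb).** For any fixed `w ≥ 1` and `η > 0` there is
`N₀ < ∞` such that for all `N > N₀`, the fixed point `x^{(∞)}` of the coupled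
recursion satisfies `max_i x_i^{(∞)} + η ≥ x̲*`, where `x̲*` is the smallest
minimizer of `U_s` over `X = [0, x_max]`. -/
theorem stmt_1
    (xmax ymax : ℝ) (hxmax : 0 < xmax) (hymax : 0 < ymax)
    (f g : ℝ → ℝ)
    (hf_maps : Set.MapsTo f (Set.Icc 0 ymax) (Set.Icc 0 xmax))
    (hf_mono : MonotoneOn f (Set.Icc 0 ymax))
    (hf_C1 : ContDiffOn ℝ 1 f (Set.Icc 0 ymax))
    (hg_maps : Set.MapsTo g (Set.Icc 0 xmax) (Set.Icc 0 ymax))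
    (hg_strict : StrictMonoOn g (Set.Icc 0 xmax))
    (hg_C2 : ContDiffOn ℝ 2 g (Set.Icc 0 xmax))
    (hg_top : g xmax = ymax)
    (Us : ℝ → ℝ)
    (hUs : ∀ x : ℝ, Us x = x * g x - (∫ z in (0:ℝ)..x, g z) - ∫ z in (0:ℝ)..(g x), f z)
    (xund : ℝ) (hxund_mem : xund ∈ Set.Icc 0 xmax)
    (hxund_min : ∀ z ∈ Set.Icc 0 xmax, Us xund ≤ Us z)
    (hxund_least : ∀ x ∈ Set.Icc 0 xmax, (∀ z ∈ Set.Icc 0 xmax, Us x ≤ Us z) → xund ≤ x)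
    (w : ℕ) (hw : 1 ≤ w) (η : ℝ) (hη : 0 < η) :
    ∃ N₀ : ℕ, ∀ N : ℕ, N₀ < N →
      ∀ xinf : Fin (N + w - 1) → ℝ,
        (∀ i, Tendsto (fun ℓ => coupledSeq w N f g xmax ℓ i) atTop (nhds (xinf i))) →
        ∃ i, xund ≤ xinf i + η :=
  stmt_1_general xmax ymax f g hf_maps hf_mono hf_C1 hg_maps hg_strict hg_C2 Us hUs xund hxund_mem
    hxund_min hxund_least w hw η hη
end

section
/- Suppose f and g are both strictly increasing C² functions. Define V_s(y) = y·f(y) − F(y) − G(f(y)) and 𝓕' = {y ∈ Y : y = g(f(y))}. Then: (1) 𝓕' = g(𝓕) and 𝓕 = f(𝓕'); (2) if x ∈ 𝓕 then U_s(x) = V_s(g(x)), and if y ∈ 𝓕' then V_s(y) = U_s(f(y)); (3) the minimizer sets 𝓜 = argmin_{x∈X} U_s(x) and 𝓜' = argmin_{y∈Y} V_s(y) satisfy 𝓜' = g(𝓜) and 𝓜 = f(𝓜'). -/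
open Set Filter

private lemma key_int_neg (m : ℝ) (g : ℝ → ℝ)
    (hgc : ContinuousOn g (Set.Icc 0 m)) (hgs : StrictMonoOn g (Set.Icc 0 m))
    {a b : ℝ} (ha : a ∈ Set.Icc 0 m) (hb : b ∈ Set.Icc 0 m) (hab : a ≠ b) :
    (∫ z in a..b, (g a - g z)) < 0 := by
  rcases lt_or_gt_of_ne hab with h | h
  · have hint : IntervalIntegrable (fun z => g z - g a) MeasureTheory.volume a b := by
      apply ContinuousOn.intervalIntegrable
      exact (hgc.mono (by rw [Set.uIcc_of_le h.le]; exact Set.Icc_subset_Icc ha.1 hb.2)).sub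
        continuousOn_const
    have hpos : 0 < ∫ z in a..b, (g z - g a) := by
      apply intervalIntegral.intervalIntegral_pos_of_pos_on hint _ h
      intro z hz
      have hz' : z ∈ Set.Icc 0 m := ⟨le_trans ha.1 hz.1.le, le_trans hz.2.le hb.2⟩
      have := hgs ha hz' hz.1
      linarith
    have hneg : (∫ z in a..b, (g a - g z)) = -∫ z in a..b, (g z - g a) := by
      rw [← intervalIntegral.integral_neg]
      congr 1; ext z; ring
    linarith
  · have hint : IntervalIntegrable (fun z => g a - g z) MeasureTheory.volume b a := by
      apply ContinuousOn.intervalIntegrable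
      exact continuousOn_const.sub
        (hgc.mono (by rw [Set.uIcc_of_le h.le]; exact Set.Icc_subset_Icc hb.1 ha.2))
    have hpos : 0 < ∫ z in b..a, (g a - g z) := by
      apply intervalIntegral.intervalIntegral_pos_of_pos_on hint _ h
      intro z hz
      have hz' : z ∈ Set.Icc 0 m := ⟨le_trans hb.1 hz.1.le, le_trans hz.2.le ha.2⟩
      have := hgs hz' ha hz.2
      linarith
    rw [intervalIntegral.integral_symm]
    linarith

private lemma diff_eq (xmax : ℝ) (f g Us Vs : ℝ → ℝ)
    (hgc : ContinuousOn g (Set.Icc 0 xmax))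
    (hUs : ∀ x : ℝ, Us x = x * g x - (∫ z in (0:ℝ)..x, g z) - ∫ z in (0:ℝ)..(g x), f z)
    (hVs : ∀ y : ℝ, Vs y = y * f y - (∫ z in (0:ℝ)..y, f z) - ∫ z in (0:ℝ)..(f y), g z)
    (x : ℝ) (hx : x ∈ Set.Icc 0 xmax) (hb : f (g x) ∈ Set.Icc 0 xmax) :
    Vs (g x) - Us x = ∫ z in x..(f (g x)), (g x - g z) := by
  set b := f (g x) with hbdef
  have hi0x : IntervalIntegrable g MeasureTheory.volume 0 x :=
    (hgc.mono (by rw [Set.uIcc_of_le hx.1]; exact Set.Icc_subset_Icc le_rfl hx.2)).intervalIntegrable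
  have hi0b : IntervalIntegrable g MeasureTheory.volume 0 b :=
    (hgc.mono (by rw [Set.uIcc_of_le hb.1]; exact Set.Icc_subset_Icc le_rfl hb.2)).intervalIntegrable
  have hixb : IntervalIntegrable g MeasureTheory.volume x b :=
    (hgc.mono (Set.uIcc_subset_Icc hx hb)).intervalIntegrable
  have hsub : (∫ z in (0:ℝ)..b, g z) - ∫ z in (0:ℝ)..x, g z = ∫ z in x..b, g z :=
    intervalIntegral.integral_interval_sub_left hi0b hi0x
  have hconst : (∫ z in x..b, (g x - g z)) = (b - x) * g x - ∫ z in x..b, g z := by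
    rw [intervalIntegral.integral_sub intervalIntegrable_const hixb,
      intervalIntegral.integral_const, smul_eq_mul]
  rw [hVs (g x), hUs x, ← hbdef]
  linarith

private lemma half (xmax ymax : ℝ) (f g Us Vs : ℝ → ℝ)
    (hf_maps : Set.MapsTo f (Set.Icc 0 ymax) (Set.Icc 0 xmax))
    (hg_maps : Set.MapsTo g (Set.Icc 0 xmax) (Set.Icc 0 ymax))
    (hgc : ContinuousOn g (Set.Icc 0 xmax))
    (hgs : StrictMonoOn g (Set.Icc 0 xmax))
    (hUs : ∀ x : ℝ, Us x = x * g x - (∫ z in (0:ℝ)..x, g z) - ∫ z in (0:ℝ)..(g x), f z)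
    (hVs : ∀ y : ℝ, Vs y = y * f y - (∫ z in (0:ℝ)..y, f z) - ∫ z in (0:ℝ)..(f y), g z)
    (x : ℝ) (hx : x ∈ Set.Icc 0 xmax) :
    Vs (g x) ≤ Us x ∧ (x = f (g x) ↔ Vs (g x) = Us x) := by
  have hb : f (g x) ∈ Set.Icc 0 xmax := hf_maps (hg_maps hx)
  have hd := diff_eq xmax f g Us Vs hgc hUs hVs x hx hb
  have heq : x = f (g x) → Vs (g x) = Us x := by
    intro h
    rw [← h, intervalIntegral.integral_same] at hd
    linarith
  refine ⟨?_, heq, ?_⟩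
  · by_cases h : x = f (g x)
    · linarith [heq h]
    · linarith [key_int_neg xmax g hgc hgs hx hb h]
  · intro h
    by_contra hne
    have := key_int_neg xmax g hgc hgs hx hb hne
    linarith

private lemma fix_eq (xmax ymax : ℝ) (f g : ℝ → ℝ)
    (hf_maps : Set.MapsTo f (Set.Icc 0 ymax) (Set.Icc 0 xmax))
    (hg_maps : Set.MapsTo g (Set.Icc 0 xmax) (Set.Icc 0 ymax)) :
    {y ∈ Set.Icc 0 ymax | y = g (f y)} = g '' {x ∈ Set.Icc 0 xmax | x = f (g x)} := by
  ext y
  constructor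
  · rintro ⟨hy, hfix⟩
    exact ⟨f y, ⟨hf_maps hy, by rw [← hfix]⟩, hfix.symm⟩
  · rintro ⟨x, ⟨hx, hfix⟩, rfl⟩
    exact ⟨hg_maps hx, by rw [← hfix]⟩

private lemma min_eq (xmax ymax : ℝ) (f g Us Vs : ℝ → ℝ)
    (hf_maps : Set.MapsTo f (Set.Icc 0 ymax) (Set.Icc 0 xmax))
    (hg_maps : Set.MapsTo g (Set.Icc 0 xmax) (Set.Icc 0 ymax))
    (hfc : ContinuousOn f (Set.Icc 0 ymax))
    (hfs : StrictMonoOn f (Set.Icc 0 ymax))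
    (hgc : ContinuousOn g (Set.Icc 0 xmax))
    (hgs : StrictMonoOn g (Set.Icc 0 xmax))
    (hUs : ∀ x : ℝ, Us x = x * g x - (∫ z in (0:ℝ)..x, g z) - ∫ z in (0:ℝ)..(g x), f z)
    (hVs : ∀ y : ℝ, Vs y = y * f y - (∫ z in (0:ℝ)..y, f z) - ∫ z in (0:ℝ)..(f y), g z) :
    {y ∈ Set.Icc 0 ymax | ∀ z ∈ Set.Icc 0 ymax, Vs y ≤ Vs z}
      = g '' {x ∈ Set.Icc 0 xmax | ∀ z ∈ Set.Icc 0 xmax, Us x ≤ Us z} := by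
  have H1 : ∀ x ∈ Set.Icc 0 xmax, Vs (g x) ≤ Us x ∧ (x = f (g x) ↔ Vs (g x) = Us x) :=
    fun x hx => half xmax ymax f g Us Vs hf_maps hg_maps hgc hgs hUs hVs x hx
  have H2 : ∀ y ∈ Set.Icc 0 ymax, Us (f y) ≤ Vs y ∧ (y = g (f y) ↔ Us (f y) = Vs y) :=
    fun y hy => half ymax xmax g f Vs Us hg_maps hf_maps hfc hfs hVs hUs y hy
  ext y
  constructor
  · rintro ⟨hy, hmin⟩
    have h1 := (H1 (f y) (hf_maps hy)).1
    have h2 := (H2 y hy).1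
    have h3 := hmin (g (f y)) (hg_maps (hf_maps hy))
    have heq : Us (f y) = Vs y := le_antisymm h2 (by linarith)
    refine ⟨f y, ⟨hf_maps hy, fun z hz => ?_⟩, ((H2 y hy).2.mpr heq).symm⟩
    have h4 := (H1 z hz).1
    have h5 := hmin (g z) (hg_maps hz)
    linarith
  · rintro ⟨x, ⟨hx, hmin⟩, rfl⟩
    have h1 := (H1 x hx).1
    have h2 := (H2 (g x) (hg_maps hx)).1
    have h3 := hmin (f (g x)) (hf_maps (hg_maps hx))
    have heq : Vs (g x) = Us x := le_antisymm h1 (by linarith)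
    refine ⟨hg_maps hx, fun w hw => ?_⟩
    have h4 := (H2 w hw).1
    have h5 := hmin (f w) (hf_maps hw)
    linarith

/-- **Lemma (half_iter_shift).** If `f` and `g` are both strictly increasing `C²`
functions, then with `V_s y = y f(y) − F(y) − G(f(y))` and
`𝓕' = {y ∈ Y : y = g (f y)}`:
(1) `𝓕' = g '' 𝓕` and `𝓕 = f '' 𝓕'`;
(2) on fixed points the two potentials agree: `U_s x = V_s (g x)` for `x ∈ 𝓕` and
`V_s y = U_s (f y)` for `y ∈ 𝓕'`;
(3) the minimizer sets satisfy `𝓜' = g '' 𝓜` and `𝓜 = f '' 𝓜'`. -/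
theorem stmt_4
    (xmax ymax : ℝ) (hxmax : 0 < xmax) (hymax : 0 < ymax)
    (f g : ℝ → ℝ)
    (hf_maps : Set.MapsTo f (Set.Icc 0 ymax) (Set.Icc 0 xmax))
    (hf_strict : StrictMonoOn f (Set.Icc 0 ymax))
    (hf_C2 : ContDiffOn ℝ 2 f (Set.Icc 0 ymax))
    (hg_maps : Set.MapsTo g (Set.Icc 0 xmax) (Set.Icc 0 ymax))
    (hg_strict : StrictMonoOn g (Set.Icc 0 xmax))
    (hg_C2 : ContDiffOn ℝ 2 g (Set.Icc 0 xmax))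
    (hg_top : g xmax = ymax)
    (Us Vs : ℝ → ℝ)
    (hUs : ∀ x : ℝ, Us x = x * g x - (∫ z in (0:ℝ)..x, g z) - ∫ z in (0:ℝ)..(g x), f z)
    (hVs : ∀ y : ℝ, Vs y = y * f y - (∫ z in (0:ℝ)..y, f z) - ∫ z in (0:ℝ)..(f y), g z)
    (𝓕 𝓕' : Set ℝ)
    (h𝓕 : 𝓕 = {x ∈ Set.Icc 0 xmax | x = f (g x)})
    (h𝓕' : 𝓕' = {y ∈ Set.Icc 0 ymax | y = g (f y)})
    (𝓜 𝓜' : Set ℝ)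
    (h𝓜 : 𝓜 = {x ∈ Set.Icc 0 xmax | ∀ z ∈ Set.Icc 0 xmax, Us x ≤ Us z})
    (h𝓜' : 𝓜' = {y ∈ Set.Icc 0 ymax | ∀ z ∈ Set.Icc 0 ymax, Vs y ≤ Vs z}) :
    (𝓕' = g '' 𝓕 ∧ 𝓕 = f '' 𝓕')
    ∧ ((∀ x ∈ 𝓕, Us x = Vs (g x)) ∧ (∀ y ∈ 𝓕', Vs y = Us (f y)))
    ∧ (𝓜' = g '' 𝓜 ∧ 𝓜 = f '' 𝓜') := by
  subst h𝓕 h𝓕' h𝓜 h𝓜'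
  have hfc := hf_C2.continuousOn
  have hgc := hg_C2.continuousOn
  refine ⟨⟨fix_eq xmax ymax f g hf_maps hg_maps, fix_eq ymax xmax g f hg_maps hf_maps⟩,
    ⟨?_, ?_⟩,
    min_eq xmax ymax f g Us Vs hf_maps hg_maps hfc hf_strict hgc hg_strict hUs hVs,
    min_eq ymax xmax g f Vs Us hg_maps hf_maps hgc hg_strict hfc hf_strict hVs hUs⟩
  · rintro x ⟨hx, hfix⟩
    exact ((half xmax ymax f g Us Vs hf_maps hg_maps hgc hg_strict hUs hVs x hx).2.mp hfix).symm
  · rintro y ⟨hy, hfix⟩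
    exact ((half ymax xmax g f Vs Us hg_maps hf_maps hfc hf_strict hVs hUs y hy).2.mp hfix).symm
end

section
/- For every x ∈ X, U_s(f(g(x))) ≤ U_s(x), with strict inequality whenever f(g(x)) ≠ x. Furthermore, every local minimum of U_s on X is a fixed point of the uncoupled recursion, i.e. satisfies f(g(x)) = x. -/
open Set Filter

lemma aux_int_ub {h : ℝ → ℝ} {a b C : ℝ} (hab : a ≤ b)
    (hint : IntervalIntegrable h MeasureTheory.volume a b)
    (hC : ∀ s ∈ Set.Icc a b, h s ≤ C) :
    (∫ s in a..b, h s) ≤ (b - a) * C := by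
  have := intervalIntegral.integral_mono_on hab hint (intervalIntegrable_const (c := C)) hC
  simpa [intervalIntegral.integral_const, smul_eq_mul] using this

lemma aux_int_lb {h : ℝ → ℝ} {a b C : ℝ} (hab : a ≤ b)
    (hint : IntervalIntegrable h MeasureTheory.volume a b)
    (hC : ∀ s ∈ Set.Icc a b, C ≤ h s) :
    (b - a) * C ≤ ∫ s in a..b, h s := by
  have := intervalIntegral.integral_mono_on hab (intervalIntegrable_const (c := C)) hint hC
  simpa [intervalIntegral.integral_const, smul_eq_mul] using this

/-- **Lemma (scalar_potential_minima_fp).** The potential value is non-increasing with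
iteration (`U_s (f (g x)) ≤ U_s x`) and strictly decreasing if `x` is not a fixed point.
Furthermore, all local minima of `U_s` on `X = [0, x_max]` occur at fixed points. -/
theorem stmt_6
    (xmax ymax : ℝ) (hxmax : 0 < xmax) (hymax : 0 < ymax)
    (f g : ℝ → ℝ)
    (hf_maps : Set.MapsTo f (Set.Icc 0 ymax) (Set.Icc 0 xmax))
    (hf_mono : MonotoneOn f (Set.Icc 0 ymax))
    (hf_C1 : ContDiffOn ℝ 1 f (Set.Icc 0 ymax))
    (hg_maps : Set.MapsTo g (Set.Icc 0 xmax) (Set.Icc 0 ymax))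
    (hg_strict : StrictMonoOn g (Set.Icc 0 xmax))
    (hg_C2 : ContDiffOn ℝ 2 g (Set.Icc 0 xmax))
    (hg_top : g xmax = ymax)
    (Us : ℝ → ℝ)
    (hUs : ∀ x : ℝ, Us x = x * g x - (∫ z in (0:ℝ)..x, g z) - ∫ z in (0:ℝ)..(g x), f z) :
    (∀ x ∈ Set.Icc 0 xmax, Us (f (g x)) ≤ Us x ∧ (f (g x) ≠ x → Us (f (g x)) < Us x))
    ∧ (∀ x ∈ Set.Icc 0 xmax, IsLocalMinOn Us (Set.Icc 0 xmax) x → f (g x) = x) := by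
  have hgc : ContinuousOn g (Set.Icc 0 xmax) := hg_C2.continuousOn
  have hfc : ContinuousOn f (Set.Icc 0 ymax) := hf_C1.continuousOn
  have gInt : ∀ a b : ℝ, a ∈ Set.Icc 0 xmax → b ∈ Set.Icc 0 xmax →
      IntervalIntegrable g MeasureTheory.volume a b := by
    intro a b ha hb
    exact (hgc.mono (Set.uIcc_subset_Icc ha hb)).intervalIntegrable
  have fInt : ∀ a b : ℝ, a ∈ Set.Icc 0 ymax → b ∈ Set.Icc 0 ymax →
      IntervalIntegrable f MeasureTheory.volume a b := by
    intro a b ha hb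
    exact (hfc.mono (Set.uIcc_subset_Icc ha hb)).intervalIntegrable
  have h0x : (0:ℝ) ∈ Set.Icc (0:ℝ) xmax := ⟨le_refl _, hxmax.le⟩
  have h0y : (0:ℝ) ∈ Set.Icc (0:ℝ) ymax := ⟨le_refl _, hymax.le⟩
  -- key difference formula
  have key : ∀ t ∈ Set.Icc (0:ℝ) xmax, ∀ x ∈ Set.Icc (0:ℝ) xmax,
      Us x - Us t = ((x - t) * g x - ∫ s in t..x, g s)
        + (t * (g x - g t) - ∫ s in (g t)..(g x), f s) := by
    intro t ht x hx
    have h1 : (∫ s in (0:ℝ)..x, g s) - (∫ s in (0:ℝ)..t, g s) = ∫ s in t..x, g s :=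
      intervalIntegral.integral_interval_sub_left (gInt 0 x h0x hx) (gInt 0 t h0x ht)
    have h2 : (∫ s in (0:ℝ)..(g x), f s) - (∫ s in (0:ℝ)..(g t), f s)
        = ∫ s in (g t)..(g x), f s :=
      intervalIntegral.integral_interval_sub_left (fInt 0 (g x) h0y (hg_maps hx))
        (fInt 0 (g t) h0y (hg_maps ht))
    rw [hUs, hUs]
    linarith [h1, h2]
  -- core strict decrease, case t < x with f (g x) ≤ t
  have core_lt : ∀ x ∈ Set.Icc (0:ℝ) xmax, ∀ t ∈ Set.Icc (0:ℝ) xmax,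
      f (g x) ≤ t → t < x → Us t < Us x := by
    intro x hx t ht hfg htx
    set m := (t + x) / 2 with hm
    have hm1 : t < m := by simp only [hm]; linarith
    have hm2 : m < x := by simp only [hm]; linarith
    have hmI : m ∈ Set.Icc (0:ℝ) xmax := ⟨le_trans ht.1 hm1.le, le_trans hm2.le hx.2⟩
    have hsplit : (∫ s in t..m, g s) + (∫ s in m..x, g s) = ∫ s in t..x, g s :=
      intervalIntegral.integral_add_adjacent_intervals (gInt t m ht hmI) (gInt m x hmI hx)
    have hb1 : (∫ s in t..m, g s) ≤ (m - t) * g m := by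
      apply aux_int_ub hm1.le (gInt t m ht hmI)
      intro s hs
      exact hg_strict.monotoneOn ⟨le_trans ht.1 hs.1, le_trans hs.2 hmI.2⟩ hmI hs.2
    have hb2 : (∫ s in m..x, g s) ≤ (x - m) * g x := by
      apply aux_int_ub hm2.le (gInt m x hmI hx)
      intro s hs
      exact hg_strict.monotoneOn ⟨le_trans hmI.1 hs.1, le_trans hs.2 hx.2⟩ hx hs.2
    have hgm : g m < g x := hg_strict hmI hx hm2
    have hgt : g t < g x := hg_strict ht hx htx
    have hb3 : (∫ s in (g t)..(g x), f s) ≤ (g x - g t) * t := by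
      apply aux_int_ub hgt.le (fInt (g t) (g x) (hg_maps ht) (hg_maps hx))
      intro s hs
      have hsY : s ∈ Set.Icc (0:ℝ) ymax := ⟨le_trans (hg_maps ht).1 hs.1,
        le_trans hs.2 (hg_maps hx).2⟩
      exact le_trans (hf_mono hsY (hg_maps hx) hs.2) hfg
    have hA : 0 < (m - t) * (g x - g m) := mul_pos (by linarith) (by linarith)
    have hkey := key t ht x hx
    nlinarith [hkey, hsplit, hb1, hb2, hb3, hA]
  -- core strict decrease, case x < t with t ≤ f (g x)
  have core_gt : ∀ x ∈ Set.Icc (0:ℝ) xmax, ∀ t ∈ Set.Icc (0:ℝ) xmax,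
      t ≤ f (g x) → x < t → Us t < Us x := by
    intro x hx t ht hfg hxt
    set m := (x + t) / 2 with hm
    have hm1 : x < m := by simp only [hm]; linarith
    have hm2 : m < t := by simp only [hm]; linarith
    have hmI : m ∈ Set.Icc (0:ℝ) xmax := ⟨le_trans hx.1 hm1.le, le_trans hm2.le ht.2⟩
    have hsplit : (∫ s in x..m, g s) + (∫ s in m..t, g s) = ∫ s in x..t, g s :=
      intervalIntegral.integral_add_adjacent_intervals (gInt x m hx hmI) (gInt m t hmI ht)
    have hb1 : (m - x) * g x ≤ ∫ s in x..m, g s := by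
      apply aux_int_lb hm1.le (gInt x m hx hmI)
      intro s hs
      exact hg_strict.monotoneOn hx ⟨le_trans hx.1 hs.1, le_trans hs.2 hmI.2⟩ hs.1
    have hb2 : (t - m) * g m ≤ ∫ s in m..t, g s := by
      apply aux_int_lb hm2.le (gInt m t hmI ht)
      intro s hs
      exact hg_strict.monotoneOn hmI ⟨le_trans hmI.1 hs.1, le_trans hs.2 ht.2⟩ hs.1
    have hgm : g x < g m := hg_strict hx hmI hm1
    have hgt : g x < g t := hg_strict hx ht hxt
    have hb3 : (g t - g x) * t ≤ ∫ s in (g x)..(g t), f s := by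
      apply aux_int_lb hgt.le (fInt (g x) (g t) (hg_maps hx) (hg_maps ht))
      intro s hs
      have hsY : s ∈ Set.Icc (0:ℝ) ymax := ⟨le_trans (hg_maps hx).1 hs.1,
        le_trans hs.2 (hg_maps ht).2⟩
      exact le_trans hfg (hf_mono (hg_maps hx) hsY hs.1)
    have hb3' : (∫ s in (g t)..(g x), f s) ≤ -((g t - g x) * t) := by
      rw [intervalIntegral.integral_symm]
      linarith [hb3]
    have hx2t : (∫ s in x..t, g s) = -(∫ s in t..x, g s) := by
      rw [intervalIntegral.integral_symm]
    have hA : 0 < (t - m) * (g m - g x) := mul_pos (by linarith) (by linarith)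
    have hkey := key t ht x hx
    nlinarith [hkey, hsplit, hb1, hb2, hb3', hA, hx2t]
  -- now assemble
  constructor
  · intro x hx
    have hx' : f (g x) ∈ Set.Icc (0:ℝ) xmax := hf_maps (hg_maps hx)
    rcases lt_trichotomy (f (g x)) x with hlt | heq | hgt
    · have := core_lt x hx (f (g x)) hx' le_rfl hlt
      exact ⟨this.le, fun _ => this⟩
    · exact ⟨le_of_eq (by rw [heq]), fun h => absurd heq h⟩
    · have := core_gt x hx (f (g x)) hx' le_rfl hgt
      exact ⟨this.le, fun _ => this⟩
  · intro x hx hmin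
    by_contra hne
    have hx' : f (g x) ∈ Set.Icc (0:ℝ) xmax := hf_maps (hg_maps hx)
    have hmem : {y | Us x ≤ Us y} ∈ nhdsWithin x (Set.Icc 0 xmax) := hmin
    rw [Metric.mem_nhdsWithin_iff] at hmem
    obtain ⟨ε, hε, hsub⟩ := hmem
    rcases lt_or_gt_of_ne hne with hlt | hgt
    · -- f (g x) < x, pick t ∈ (f (g x), x) within ε of x
      set t := max ((f (g x) + x) / 2) (x - ε / 2) with htdef
      have ht1 : f (g x) < t := lt_of_lt_of_le (by linarith) (le_max_left _ _)
      have ht2 : t < x := max_lt (by linarith) (by linarith)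
      have htI : t ∈ Set.Icc (0:ℝ) xmax :=
        ⟨le_trans (by linarith [hx'.1, hx.1] : (0:ℝ) ≤ (f (g x) + x) / 2) (le_max_left _ _),
         le_trans ht2.le hx.2⟩
      have hball : t ∈ Metric.ball x ε := by
        rw [Metric.mem_ball, Real.dist_eq, abs_sub_lt_iff]
        constructor
        · linarith
        · have : x - ε / 2 ≤ t := le_max_right _ _
          linarith
      have h1 : Us x ≤ Us t := hsub ⟨hball, htI⟩
      have h2 : Us t < Us x := core_lt x hx t htI ht1.le ht2
      linarith
    · -- x < f (g x), pick t ∈ (x, f (g x)) within ε of x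
      set t := min ((x + f (g x)) / 2) (x + ε / 2) with htdef
      have ht1 : t < f (g x) := lt_of_le_of_lt (min_le_left _ _) (by linarith)
      have ht2 : x < t := lt_min (by linarith) (by linarith)
      have htI : t ∈ Set.Icc (0:ℝ) xmax :=
        ⟨le_trans hx.1 ht2.le, le_trans ht1.le hx'.2⟩
      have hball : t ∈ Metric.ball x ε := by
        rw [Metric.mem_ball, Real.dist_eq, abs_sub_lt_iff]
        constructor
        · have : t ≤ x + ε / 2 := min_le_right _ _
          linarith
        · linarith
      have h1 : Us x ≤ Us t := hsub ⟨hball, htI⟩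
      have h2 : Us t < Us x := core_gt x hx t htI ht1.le ht2
      linarith
end

section
/- The iterates of the coupled recursion satisfy, for every ℓ ≥ 0: (1) x^{(ℓ+1)} ⪯ x^{(ℓ)} componentwise; (2) the vector x^{(ℓ)} is symmetric, i.e. x_i^{(ℓ)} = x_{M−i+1}^{(ℓ)} for all i ∈ [1:M]; and (3) x^{(ℓ)} is unimodal, i.e. x_{i+1}^{(ℓ)} ≥ x_i^{(ℓ)} for all i < ⌈M/2⌉. -/
open Set Filter

namespace Stmt7Aux

/-- Junk extension of a `Fin n` vector to `ℕ`. -/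
noncomputable def ext {n : ℕ} (u : Fin n → ℝ) (t : ℕ) : ℝ :=
  if h : t < n then u ⟨t, h⟩ else 0

/-- Symmetric-unimodal ("mountain") predicate. -/
def Mtn (n : ℕ) (z : Fin n → ℝ) : Prop :=
  ∀ a b : Fin n, min a.1 (n - 1 - a.1) ≤ min b.1 (n - 1 - b.1) → z a ≤ z b

lemma mtn_sym {n : ℕ} {z : Fin n → ℝ} (h : Mtn n z) (i : Fin n) : z i = z i.rev := by
  have hi := i.isLt
  refine le_antisymm (h i i.rev ?_) (h i.rev i ?_) <;>
    · rw [Fin.val_rev]; omega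

lemma mtn_of {n : ℕ} (z : Fin n → ℝ)
    (hsym : ∀ i : Fin n, z i = z i.rev)
    (hstep : ∀ i : ℕ, ∀ h1 : i + 1 < n, 2 * i + 2 ≤ n → z ⟨i, by omega⟩ ≤ z ⟨i + 1, h1⟩) :
    Mtn n z := by
  have chain : ∀ d : ℕ, ∀ hd : d < n, 2 * d ≤ n - 1 → ∀ c : ℕ, ∀ _hc : c ≤ d,
      z ⟨c, by omega⟩ ≤ z ⟨d, hd⟩ := by
    intro d
    induction d with
    | zero => intro hd _ c hc; interval_cases c; exact le_refl _
    | succ m ih =>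
      intro hd hle c hc
      rcases Nat.lt_or_ge c (m + 1) with h | h
      · exact (ih (by omega) (by omega) c (by omega)).trans (hstep m hd (by omega))
      · have : c = m + 1 := by omega
        subst this; exact le_refl _
  intro a b hab
  have hpa := a.isLt
  have hpb := b.isLt
  have key : ∀ a : Fin n, ∀ hpa : (a : ℕ) < n, z a = z ⟨min a.1 (n - 1 - a.1), by omega⟩ := by
    intro a hpa
    rcases Nat.le_total a.1 (n - 1 - a.1) with h | h
    · congr 1
      exact Fin.ext (show a.1 = min a.1 (n - 1 - a.1) by omega)
    · rw [hsym a]; congr 1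
      refine Fin.ext ?_
      rw [Fin.val_rev]
      exact (show n - (a.1 + 1) = min a.1 (n - 1 - a.1) by omega)
  have ha := key a hpa
  have hb := key b hpb
  rw [ha, hb]
  exact chain _ (by omega) (by omega) _ hab

lemma sum_rev {n : ℕ} (F : Fin n → ℝ) : ∑ i : Fin n, F i.rev = ∑ i, F i :=
  Fintype.sum_bijective Fin.rev Fin.rev_bijective _ _ (fun _ => rfl)

lemma Amat_nonneg {w N : ℕ} (j : Fin N) (k : Fin (N + w - 1)) : 0 ≤ Amat w N j k := by
  unfold Amat; split_ifs
  · positivity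
  · exact le_refl _

lemma Amat_rev {w N : ℕ} (hw : 1 ≤ w) (j : Fin N) (k : Fin (N + w - 1)) :
    Amat w N j.rev k.rev = Amat w N j k := by
  have hj := j.isLt; have hk := k.isLt
  unfold Amat
  rw [Fin.val_rev, Fin.val_rev]
  exact if_congr ⟨fun h => by omega, fun h => by omega⟩ rfl rfl

lemma row_sum {w N : ℕ} (hw : 1 ≤ w) (j : Fin N) (u : Fin (N + w - 1) → ℝ) :
    ∑ k, Amat w N j k * u k
      = (w : ℝ)⁻¹ * ∑ t ∈ Finset.Ico (j : ℕ) ((j : ℕ) + w), ext u t := by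
  have hj := j.isLt
  calc ∑ k, Amat w N j k * u k
      = ∑ t ∈ Finset.range (N + w - 1),
          (fun t : ℕ => if (j : ℕ) ≤ t ∧ t < (j : ℕ) + w then (w : ℝ)⁻¹ * ext u t else 0) t := by
        rw [← Fin.sum_univ_eq_sum_range]
        refine Finset.sum_congr rfl fun k _ => ?_
        have hk := k.isLt
        simp only [Amat, ext, hk, dif_pos, Fin.eta]
        split_ifs with h
        · rfl
        · exact zero_mul _
    _ = ∑ t ∈ (Finset.range (N + w - 1)).filter
          (fun t => (j : ℕ) ≤ t ∧ t < (j : ℕ) + w), (w : ℝ)⁻¹ * ext u t :=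
        (Finset.sum_filter _ _).symm
    _ = ∑ t ∈ Finset.Ico (j : ℕ) ((j : ℕ) + w), (w : ℝ)⁻¹ * ext u t := by
        congr 1
        ext t
        simp only [Finset.mem_filter, Finset.mem_range, Finset.mem_Ico]
        omega
    _ = (w : ℝ)⁻¹ * ∑ t ∈ Finset.Ico (j : ℕ) ((j : ℕ) + w), ext u t := by
        rw [Finset.mul_sum]

lemma col_sum {w N : ℕ} (hw : 1 ≤ w) (hN : 1 ≤ N) (i : Fin (N + w - 1)) (c : Fin N → ℝ) :
    ∑ j, Amat w N j i * c j
      = (w : ℝ)⁻¹ * ∑ t ∈ Finset.Ico ((i : ℕ) + 1 - w) (min ((i : ℕ) + 1) N), ext c t := by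
  have hi := i.isLt
  calc ∑ j, Amat w N j i * c j
      = ∑ t ∈ Finset.range N,
          (fun t : ℕ => if t ≤ (i : ℕ) ∧ (i : ℕ) < t + w then (w : ℝ)⁻¹ * ext c t else 0) t := by
        rw [← Fin.sum_univ_eq_sum_range]
        refine Finset.sum_congr rfl fun j _ => ?_
        have hjlt := j.isLt
        simp only [Amat, ext, hjlt, dif_pos, Fin.eta]
        split_ifs with h
        · rfl
        · exact zero_mul _
    _ = ∑ t ∈ (Finset.range N).filter
          (fun t => t ≤ (i : ℕ) ∧ (i : ℕ) < t + w), (w : ℝ)⁻¹ * ext c t :=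
        (Finset.sum_filter _ _).symm
    _ = ∑ t ∈ Finset.Ico ((i : ℕ) + 1 - w) (min ((i : ℕ) + 1) N), (w : ℝ)⁻¹ * ext c t := by
        congr 1
        ext t
        simp only [Finset.mem_filter, Finset.mem_range, Finset.mem_Ico]
        omega
    _ = _ := by rw [Finset.mul_sum]

lemma ext_mem {n : ℕ} {u : Fin n → ℝ} {c : ℝ} (hc : 0 ≤ c)
    (hu : ∀ k, u k ∈ Set.Icc 0 c) : ∀ t, ext u t ∈ Set.Icc 0 c := by
  intro t
  unfold ext
  split_ifs with h
  · exact hu _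
  · exact ⟨le_refl _, hc⟩

lemma avg_mem {w a b : ℕ} (hw : 1 ≤ w) (hba : b - a ≤ w) {v : ℕ → ℝ} {c : ℝ}
    (hc : 0 ≤ c) (hv : ∀ t, v t ∈ Set.Icc 0 c) :
    (w : ℝ)⁻¹ * ∑ t ∈ Finset.Ico a b, v t ∈ Set.Icc 0 c := by
  have hwpos : (0 : ℝ) < w := by exact_mod_cast hw
  have hs0 : 0 ≤ ∑ t ∈ Finset.Ico a b, v t :=
    Finset.sum_nonneg fun t _ => (hv t).1
  have hs1 : ∑ t ∈ Finset.Ico a b, v t ≤ ((b - a : ℕ) : ℝ) * c := by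
    calc ∑ t ∈ Finset.Ico a b, v t ≤ ∑ _t ∈ Finset.Ico a b, c :=
          Finset.sum_le_sum fun t _ => (hv t).2
      _ = ((b - a : ℕ) : ℝ) * c := by
          rw [Finset.sum_const, Nat.card_Ico, nsmul_eq_mul]
  constructor
  · exact mul_nonneg (by positivity) hs0
  · have hcast : ((b - a : ℕ) : ℝ) ≤ (w : ℝ) := by exact_mod_cast hba
    calc (w : ℝ)⁻¹ * ∑ t ∈ Finset.Ico a b, v t
        ≤ (w : ℝ)⁻¹ * (((b - a : ℕ) : ℝ) * c) := by
          exact mul_le_mul_of_nonneg_left hs1 (by positivity)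
      _ ≤ (w : ℝ)⁻¹ * ((w : ℝ) * c) := by
          exact mul_le_mul_of_nonneg_left (mul_le_mul_of_nonneg_right hcast hc) (by positivity)
      _ = c := by field_simp

end Stmt7Aux

namespace Stmt7Aux

noncomputable def yvec (w N : ℕ) (g : ℝ → ℝ) (x : Fin (N + w - 1) → ℝ) (j : Fin N) : ℝ :=
  ∑ k, Amat w N j k * g (x k)

lemma coupledMap_eq (w N : ℕ) (f g : ℝ → ℝ) (x : Fin (N + w - 1) → ℝ) (i : Fin (N + w - 1)) :
    coupledMap w N f g x i = ∑ j, Amat w N j i * f (yvec w N g x j) := rfl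

section Main

variable {xmax ymax : ℝ} {f g : ℝ → ℝ} {w N : ℕ}

lemma yvec_mem (hymax : 0 ≤ ymax) (hg_maps : Set.MapsTo g (Set.Icc 0 xmax) (Set.Icc 0 ymax))
    (hw : 1 ≤ w) {x : Fin (N + w - 1) → ℝ} (hx : ∀ k, x k ∈ Set.Icc 0 xmax) (j : Fin N) :
    yvec w N g x j ∈ Set.Icc 0 ymax := by
  rw [yvec, row_sum hw j (fun k => g (x k))]
  exact avg_mem hw (by omega) hymax (ext_mem hymax (fun k => hg_maps (hx k)))

lemma map_mem (hxmax : 0 ≤ xmax) (hymax : 0 ≤ ymax)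
    (hf_maps : Set.MapsTo f (Set.Icc 0 ymax) (Set.Icc 0 xmax))
    (hg_maps : Set.MapsTo g (Set.Icc 0 xmax) (Set.Icc 0 ymax))
    (hw : 1 ≤ w) (hN : 1 ≤ N) {x : Fin (N + w - 1) → ℝ} (hx : ∀ k, x k ∈ Set.Icc 0 xmax)
    (i : Fin (N + w - 1)) :
    coupledMap w N f g x i ∈ Set.Icc 0 xmax := by
  rw [coupledMap_eq, col_sum hw hN i (fun j => f (yvec w N g x j))]
  exact avg_mem hw (by omega) hxmax
    (ext_mem hxmax (fun j => hf_maps (yvec_mem hymax hg_maps hw hx j)))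

lemma map_mono (hymax : 0 ≤ ymax)
    (hf_mono : MonotoneOn f (Set.Icc 0 ymax))
    (hg_maps : Set.MapsTo g (Set.Icc 0 xmax) (Set.Icc 0 ymax))
    (hg_mono : MonotoneOn g (Set.Icc 0 xmax))
    (hw : 1 ≤ w) {x x' : Fin (N + w - 1) → ℝ}
    (hx : ∀ k, x k ∈ Set.Icc 0 xmax) (hx' : ∀ k, x' k ∈ Set.Icc 0 xmax)
    (hle : ∀ k, x k ≤ x' k) (i : Fin (N + w - 1)) :
    coupledMap w N f g x i ≤ coupledMap w N f g x' i := by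
  rw [coupledMap_eq, coupledMap_eq]
  refine Finset.sum_le_sum fun j _ => ?_
  refine mul_le_mul_of_nonneg_left ?_ (Amat_nonneg j i)
  refine hf_mono (yvec_mem hymax hg_maps hw hx j) (yvec_mem hymax hg_maps hw hx' j) ?_
  refine Finset.sum_le_sum fun k _ => ?_
  exact mul_le_mul_of_nonneg_left (hg_mono (hx k) (hx' k) (hle k)) (Amat_nonneg j k)

lemma yvec_apply (hw : 1 ≤ w) (x : Fin (N + w - 1) → ℝ) (j : ℕ) (hj : j < N) :
    yvec w N g x ⟨j, hj⟩
      = (w : ℝ)⁻¹ * ∑ t ∈ Finset.Ico j (j + w), ext (fun k => g (x k)) t := by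
  rw [yvec, row_sum hw ⟨j, hj⟩ (fun k => g (x k))]

lemma map_apply (hw : 1 ≤ w) (hN : 1 ≤ N) (x : Fin (N + w - 1) → ℝ) (i : ℕ)
    (hi : i < N + w - 1) :
    coupledMap w N f g x ⟨i, hi⟩
      = (w : ℝ)⁻¹ * ∑ t ∈ Finset.Ico (i + 1 - w) (min (i + 1) N),
          ext (fun j => f (yvec w N g x j)) t := by
  rw [coupledMap_eq, col_sum hw hN ⟨i, hi⟩ (fun j => f (yvec w N g x j))]

lemma yvec_rev (hw : 1 ≤ w) {x : Fin (N + w - 1) → ℝ}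
    (hsymG : ∀ k : Fin (N + w - 1), g (x k.rev) = g (x k)) (j : Fin N) :
    yvec w N g x j.rev = yvec w N g x j := by
  unfold yvec
  rw [← sum_rev (fun k => Amat w N j.rev k * g (x k))]
  refine Finset.sum_congr rfl fun k _ => ?_
  show Amat w N j.rev k.rev * g (x k.rev) = Amat w N j k * g (x k)
  rw [Amat_rev hw j k, hsymG k]

lemma map_rev (hw : 1 ≤ w) {x : Fin (N + w - 1) → ℝ}
    (hsymG : ∀ k : Fin (N + w - 1), g (x k.rev) = g (x k)) (i : Fin (N + w - 1)) :
    coupledMap w N f g x i.rev = coupledMap w N f g x i := by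
  rw [coupledMap_eq, coupledMap_eq]
  rw [← sum_rev (fun j => Amat w N j i.rev * f (yvec w N g x j))]
  refine Finset.sum_congr rfl fun j _ => ?_
  show Amat w N j.rev i.rev * f (yvec w N g x j.rev) = Amat w N j i * f (yvec w N g x j)
  rw [Amat_rev hw j i, yvec_rev hw hsymG j]

lemma mtn_preserved (hxmax : 0 ≤ xmax) (hymax : 0 ≤ ymax)
    (hf_maps : Set.MapsTo f (Set.Icc 0 ymax) (Set.Icc 0 xmax))
    (hf_mono : MonotoneOn f (Set.Icc 0 ymax))
    (hg_maps : Set.MapsTo g (Set.Icc 0 xmax) (Set.Icc 0 ymax))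
    (hg_mono : MonotoneOn g (Set.Icc 0 xmax))
    (hw : 1 ≤ w) (hN : 1 ≤ N)
    {x : Fin (N + w - 1) → ℝ} (hx : ∀ k, x k ∈ Set.Icc 0 xmax)
    (hm : Mtn (N + w - 1) x) :
    Mtn (N + w - 1) (coupledMap w N f g x) := by
  have hmG : Mtn (N + w - 1) (fun k => g (x k)) :=
    fun a b h => hg_mono (hx a) (hx b) (hm a b h)
  have hsymG : ∀ k : Fin (N + w - 1), g (x k.rev) = g (x k) :=
    fun k => (mtn_sym hmG k).symm
  have hY : ∀ j, yvec w N g x j ∈ Set.Icc 0 ymax := yvec_mem hymax hg_maps hw hx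
  have hmY : Mtn N (yvec w N g x) := by
    refine mtn_of _ (fun j => (yvec_rev hw hsymG j).symm) ?_
    intro j h1 h2
    rw [yvec_apply hw x j (by omega), yvec_apply hw x (j + 1) h1]
    set G : ℕ → ℝ := ext (fun k => g (x k)) with hGdef
    have hsplit1 : ∑ t ∈ Finset.Ico j (j + w), G t
        = G j + ∑ t ∈ Finset.Ico (j + 1) (j + w), G t :=
      Finset.sum_eq_sum_Ico_succ_bot (by omega) _
    have hre : j + 1 + w = (j + w) + 1 := by omega
    have hsplit2 : ∑ t ∈ Finset.Ico (j + 1) (j + 1 + w), G t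
        = ∑ t ∈ Finset.Ico (j + 1) (j + w), G t + G (j + w) := by
      rw [hre]; exact Finset.sum_Ico_succ_top (by omega) _
    have hcmp : G j ≤ G (j + w) := by
      have hj : j < N + w - 1 := by omega
      have hjw : j + w < N + w - 1 := by omega
      rw [hGdef]
      simp only [ext, dif_pos hj, dif_pos hjw]
      exact hmG ⟨j, hj⟩ ⟨j + w, hjw⟩
        (show min j (N + w - 1 - 1 - j) ≤ min (j + w) (N + w - 1 - 1 - (j + w)) by omega)
    rw [hsplit1, hsplit2]
    exact mul_le_mul_of_nonneg_left (by linarith) (by positivity)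
  have hYF : ∀ j, f (yvec w N g x j) ∈ Set.Icc 0 xmax := fun j => hf_maps (hY j)
  have hmF : Mtn N (fun j => f (yvec w N g x j)) :=
    fun a b h => hf_mono (hY a) (hY b) (hmY a b h)
  refine mtn_of _ (fun i => (map_rev hw hsymG i).symm) ?_
  intro i h1 h2
  rw [map_apply hw hN x i (by omega), map_apply hw hN x (i + 1) h1]
  set F : ℕ → ℝ := ext (fun j => f (yvec w N g x j)) with hFdef
  have hF0 : ∀ t, F t ∈ Set.Icc 0 xmax := ext_mem hxmax hYF
  have hFcmp : ∀ s t : ℕ, s < N → t < N → min s (N - 1 - s) ≤ min t (N - 1 - t) → F s ≤ F t := by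
    intro s t hs ht h
    rw [hFdef]
    simp only [ext, dif_pos hs, dif_pos ht]
    exact hmF ⟨s, hs⟩ ⟨t, ht⟩ h
  rcases Nat.lt_or_ge (i + 1) N with hiN | hiN
  · rcases le_or_gt w (i + 1) with hwi | hwi
    · have hmin1 : min (i + 1) N = i + 1 := by omega
      have hmin2 : min (i + 1 + 1) N = i + 1 + 1 := by omega
      have ha2 : i + 1 + 1 - w = (i + 1 - w) + 1 := by omega
      rw [hmin1, hmin2, ha2]
      have hsplit1 : ∑ t ∈ Finset.Ico (i + 1 - w) (i + 1), F t
          = F (i + 1 - w) + ∑ t ∈ Finset.Ico ((i + 1 - w) + 1) (i + 1), F t :=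
        Finset.sum_eq_sum_Ico_succ_bot (by omega) _
      have hsplit2 : ∑ t ∈ Finset.Ico ((i + 1 - w) + 1) (i + 1 + 1), F t
          = ∑ t ∈ Finset.Ico ((i + 1 - w) + 1) (i + 1), F t + F (i + 1) :=
        Finset.sum_Ico_succ_top (by omega) _
      have hcmp : F (i + 1 - w) ≤ F (i + 1) :=
        hFcmp _ _ (by omega) (by omega) (by omega)
      rw [hsplit1, hsplit2]
      exact mul_le_mul_of_nonneg_left (by linarith) (by positivity)
    · have h0 : i + 1 - w = 0 := by omega
      have h0' : i + 1 + 1 - w = 0 := by omega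
      have hmin1 : min (i + 1) N = i + 1 := by omega
      have hmin2 : min (i + 1 + 1) N = i + 1 + 1 := by omega
      rw [h0, h0', hmin1, hmin2]
      have hsplit2 : ∑ t ∈ Finset.Ico 0 (i + 1 + 1), F t
          = ∑ t ∈ Finset.Ico 0 (i + 1), F t + F (i + 1) :=
        Finset.sum_Ico_succ_top (by omega) _
      rw [hsplit2]
      have := (hF0 (i + 1)).1
      exact mul_le_mul_of_nonneg_left (by linarith) (by positivity)
  · rcases le_or_gt w (i + 1) with hwi | hwi
    · exfalso; omega
    · have h0 : i + 1 - w = 0 := by omega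
      have h0' : i + 1 + 1 - w = 0 := by omega
      have hmin1 : min (i + 1) N = N := by omega
      have hmin2 : min (i + 1 + 1) N = N := by omega
      rw [h0, h0', hmin1, hmin2]

end Main

end Stmt7Aux

/-- **Lemma (coupled_scalar_dec_sym).** The coupled recursion satisfies:
(i) `x^{(ℓ+1)} ⪯ x^{(ℓ)}`; (ii) each iterate is symmetric,
`x_i^{(ℓ)} = x_{M−i+1}^{(ℓ)}` (in 0-indexed form `x i = x i.rev`); and
(iii) each iterate is unimodal: `x_{i+1}^{(ℓ)} ≥ x_i^{(ℓ)}` for (1-indexed)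
`i < ⌈M/2⌉`, i.e. for 0-indexed `i` with `i + 1 < (M+1)/2`. -/
theorem stmt_7
    (xmax ymax : ℝ) (hxmax : 0 < xmax) (hymax : 0 < ymax)
    (f g : ℝ → ℝ)
    (hf_maps : Set.MapsTo f (Set.Icc 0 ymax) (Set.Icc 0 xmax))
    (hf_mono : MonotoneOn f (Set.Icc 0 ymax))
    (hf_C1 : ContDiffOn ℝ 1 f (Set.Icc 0 ymax))
    (hg_maps : Set.MapsTo g (Set.Icc 0 xmax) (Set.Icc 0 ymax))
    (hg_strict : StrictMonoOn g (Set.Icc 0 xmax))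
    (hg_C2 : ContDiffOn ℝ 2 g (Set.Icc 0 xmax))
    (hg_top : g xmax = ymax)
    (w N : ℕ) (hw : 1 ≤ w) (hN : 1 ≤ N) :
    (∀ ℓ : ℕ, ∀ i, coupledSeq w N f g xmax (ℓ + 1) i ≤ coupledSeq w N f g xmax ℓ i)
    ∧ (∀ ℓ : ℕ, ∀ i, coupledSeq w N f g xmax ℓ i = coupledSeq w N f g xmax ℓ i.rev)
    ∧ (∀ ℓ : ℕ, ∀ i : ℕ, ∀ (h2 : i + 1 < (N + w - 1 + 1) / 2) (h1 : i + 1 < N + w - 1),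
        coupledSeq w N f g xmax ℓ ⟨i, by omega⟩
          ≤ coupledSeq w N f g xmax ℓ ⟨i + 1, h1⟩) := by
  have hg_mono : MonotoneOn g (Set.Icc 0 xmax) := hg_strict.monotoneOn
  have hbox : ∀ ℓ, ∀ k, coupledSeq w N f g xmax ℓ k ∈ Set.Icc 0 xmax := by
    intro ℓ
    induction ℓ with
    | zero => intro k; exact ⟨hxmax.le, le_refl _⟩
    | succ m ih =>
        intro k
        show coupledMap w N f g (coupledSeq w N f g xmax m) k ∈ Set.Icc 0 xmax
        exact Stmt7Aux.map_mem hxmax.le hymax.le hf_maps hg_maps hw hN ih k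
  have hmtn : ∀ ℓ, Stmt7Aux.Mtn (N + w - 1) (coupledSeq w N f g xmax ℓ) := by
    intro ℓ
    induction ℓ with
    | zero => intro a b _; exact le_refl _
    | succ m ih =>
        show Stmt7Aux.Mtn (N + w - 1) (coupledMap w N f g (coupledSeq w N f g xmax m))
        exact Stmt7Aux.mtn_preserved hxmax.le hymax.le hf_maps hf_mono hg_maps hg_mono
          hw hN (hbox m) ih
  refine ⟨?_, ?_, ?_⟩
  · intro ℓ
    induction ℓ with
    | zero =>
        intro i
        show coupledMap w N f g (coupledSeq w N f g xmax 0) i ≤ xmax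
        exact (Stmt7Aux.map_mem hxmax.le hymax.le hf_maps hg_maps hw hN (hbox 0) i).2
    | succ m ih =>
        intro i
        show coupledMap w N f g (coupledSeq w N f g xmax (m + 1)) i
          ≤ coupledMap w N f g (coupledSeq w N f g xmax m) i
        exact Stmt7Aux.map_mono hymax.le hf_mono hg_maps hg_mono hw
          (hbox (m + 1)) (hbox m) ih i
  · intro ℓ i
    exact Stmt7Aux.mtn_sym (hmtn ℓ) i
  · intro ℓ i h2 h1
    refine hmtn ℓ ⟨i, by omega⟩ ⟨i + 1, h1⟩ ?_
    show min i (N + w - 1 - 1 - i) ≤ min (i + 1) (N + w - 1 - 1 - (i + 1))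
    omega
end

section
/- Let x ∈ X^M satisfy x_i = x_{i₀} for all i ∈ [i₀:M] and x_i ≤ x_{i₀} for all i ∈ [1:M], where i₀ = ⌈M/2⌉. Let S be the shift operator on X^M defined by [Sx]_i = x_{i−1} for i ∈ [1:M] with the convention x₀ = 0. Then U_c(Sx) − U_c(x) ≤ U_s(0) − U_s(x_{i₀}). -/
open Set Filter

/-- The coupled potential
`U_c(x) = Σᵢ (g(xᵢ)xᵢ − G(xᵢ)) − Σⱼ F([A g(x)]ⱼ)`. -/
noncomputable def Uc (w N : ℕ) (f g : ℝ → ℝ) (x : Fin (N + w - 1) → ℝ) : ℝ :=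
  (∑ i, (g (x i) * x i - ∫ z in (0:ℝ)..(x i), g z))
    - ∑ j : Fin N, ∫ z in (0:ℝ)..(∑ k, Amat w N j k * g (x k)), f z

/-- The shift operator `S`: `[Sx]_i = x_{i−1}` with the convention `x₀ = 0`. -/
noncomputable def shiftS (M : ℕ) (x : Fin M → ℝ) : Fin M → ℝ :=
  fun i => if _h : (i : ℕ) = 0 then 0 else x ⟨(i : ℕ) - 1, by have := i.isLt; omega⟩

lemma sum_shift_pair {M : ℕ} (hM : 0 < M) (u v : Fin M → ℝ)
    (h : ∀ (i : ℕ) (hi : i + 1 < M), u ⟨i + 1, hi⟩ = v ⟨i, by omega⟩) :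
    ∑ i, u i = u ⟨0, hM⟩ + ((∑ i, v i) - v ⟨M - 1, by omega⟩) := by
  obtain ⟨m, rfl⟩ : ∃ m, M = m + 1 := ⟨M - 1, by omega⟩
  rw [Fin.sum_univ_succ u, Fin.sum_univ_castSucc v]
  have hs : ∑ i : Fin m, u i.succ = ∑ i : Fin m, v i.castSucc := by
    refine Finset.sum_congr rfl fun i _ => ?_
    exact h i.val (Nat.succ_lt_succ i.isLt)
  rw [hs]
  have e1 : u 0 = u ⟨0, hM⟩ := rfl
  have e2 : v (Fin.last m) = v ⟨m + 1 - 1, by omega⟩ := rfl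
  rw [e1, e2]; ring

lemma Amat_nonneg (w N : ℕ) (j : Fin N) (k : Fin (N + w - 1)) : 0 ≤ Amat w N j k := by
  unfold Amat; split <;> positivity

lemma Amat_row_sum (w N : ℕ) (hw : 1 ≤ w) (hN : 1 ≤ N) (j : Fin N) :
    ∑ k : Fin (N + w - 1), Amat w N j k = 1 := by
  classical
  have h1 : ∑ k : Fin (N + w - 1), Amat w N j k
      = ∑ k ∈ Finset.range (N + w - 1),
          (if (j : ℕ) ≤ k ∧ k < (j : ℕ) + w then (w : ℝ)⁻¹ else 0) :=
    Fin.sum_univ_eq_sum_range (fun k => if (j : ℕ) ≤ k ∧ k < (j : ℕ) + w then (w : ℝ)⁻¹ else 0) _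
  rw [h1, ← Finset.sum_filter]
  have hset : (Finset.range (N + w - 1)).filter (fun k => (j : ℕ) ≤ k ∧ k < (j : ℕ) + w)
      = Finset.Ico (j : ℕ) ((j : ℕ) + w) := by
    ext a
    simp only [Finset.mem_filter, Finset.mem_range, Finset.mem_Ico]
    have := j.isLt; omega
  rw [hset, Finset.sum_const, Nat.card_Ico, Nat.add_sub_cancel_left, nsmul_eq_mul]
  have hw0 : (w : ℝ) ≠ 0 := by positivity
  field_simp

/-- **Lemma (coupled_scalar_shift_down).** For a vector `x ∈ X^M` that is constant
(equal to `x_{i₀}`) from the midpoint `i₀ = ⌈M/2⌉` onwards and bounded above by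
`x_{i₀}` everywhere, the shift changes the coupled potential by at most
`U_c(Sx) − U_c(x) ≤ U_s(0) − U_s(x_{i₀})`. -/
theorem stmt_9
    (xmax ymax : ℝ) (hxmax : 0 < xmax) (hymax : 0 < ymax)
    (f g : ℝ → ℝ)
    (hf_maps : Set.MapsTo f (Set.Icc 0 ymax) (Set.Icc 0 xmax))
    (hf_mono : MonotoneOn f (Set.Icc 0 ymax))
    (hf_C1 : ContDiffOn ℝ 1 f (Set.Icc 0 ymax))
    (hg_maps : Set.MapsTo g (Set.Icc 0 xmax) (Set.Icc 0 ymax))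
    (hg_strict : StrictMonoOn g (Set.Icc 0 xmax))
    (hg_C2 : ContDiffOn ℝ 2 g (Set.Icc 0 xmax))
    (hg_top : g xmax = ymax)
    (Us : ℝ → ℝ)
    (hUs : ∀ x : ℝ, Us x = x * g x - (∫ z in (0:ℝ)..x, g z) - ∫ z in (0:ℝ)..(g x), f z)
    (w N : ℕ) (hw : 1 ≤ w) (hN : 1 ≤ N)
    (i₀ : Fin (N + w - 1)) (hi₀ : (i₀ : ℕ) = (N + w - 1 + 1) / 2 - 1)
    (x : Fin (N + w - 1) → ℝ)
    (hx_mem : ∀ i, x i ∈ Set.Icc 0 xmax)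
    (hx_flat : ∀ i : Fin (N + w - 1), (i₀ : ℕ) ≤ (i : ℕ) → x i = x i₀)
    (hx_le : ∀ i, x i ≤ x i₀) :
    Uc w N f g (shiftS _ x) - Uc w N f g x ≤ Us 0 - Us (x i₀) := by
  classical
  have hM : 0 < N + w - 1 := by omega
  have hN0 : 0 < N := hN
  -- shift facts
  have hsh : ∀ (i : ℕ) (hi : i + 1 < N + w - 1),
      shiftS (N + w - 1) x ⟨i + 1, hi⟩ = x ⟨i, by omega⟩ := by
    intro i hi
    simp only [shiftS]
    rw [dif_neg (by simp)]
    exact congrArg x (Fin.ext (by simp))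
  have hsh0 : shiftS (N + w - 1) x ⟨0, hM⟩ = 0 := by
    simp [shiftS]
  have hxlast : x ⟨N + w - 1 - 1, by omega⟩ = x i₀ := by
    apply hx_flat
    simp only [Fin.val_mk]
    have := i₀.isLt; omega
  -- F monotone
  have hfc : ContinuousOn f (Set.Icc 0 ymax) := hf_C1.continuousOn
  have hFmono : ∀ s t : ℝ, 0 ≤ s → s ≤ t → t ≤ ymax →
      (∫ z in (0:ℝ)..s, f z) ≤ ∫ z in (0:ℝ)..t, f z := by
    intro s t hs hst ht
    have h1 : IntervalIntegrable f MeasureTheory.volume 0 s :=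
      (hfc.mono (by rw [Set.uIcc_of_le hs]; exact Set.Icc_subset_Icc le_rfl (by linarith))).intervalIntegrable
    have h2 : IntervalIntegrable f MeasureTheory.volume s t :=
      (hfc.mono (by rw [Set.uIcc_of_le hst]; exact Set.Icc_subset_Icc hs ht)).intervalIntegrable
    have hadd := intervalIntegral.integral_add_adjacent_intervals h1 h2
    have hpos : 0 ≤ ∫ z in s..t, f z :=
      intervalIntegral.integral_nonneg hst
        (fun u hu => (hf_maps ⟨by linarith [hu.1], by linarith [hu.2]⟩).1)
    linarith
  have hgmono : MonotoneOn g (Set.Icc 0 xmax) := hg_strict.monotoneOn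
  have hx0 : (0:ℝ) ∈ Set.Icc (0:ℝ) xmax := ⟨le_rfl, hxmax.le⟩
  have hSx_mem : ∀ k, shiftS (N + w - 1) x k ∈ Set.Icc (0:ℝ) xmax := by
    intro k
    simp only [shiftS]
    split
    · exact hx0
    · exact hx_mem _
  have hg0 : g 0 ∈ Set.Icc (0:ℝ) ymax := hg_maps hx0
  have hgi : g (x i₀) ∈ Set.Icc (0:ℝ) ymax := hg_maps (hx_mem i₀)
  -- key1 : first sums
  have key1 : ∑ i, (g (shiftS (N + w - 1) x i) * shiftS (N + w - 1) x i
        - ∫ z in (0:ℝ)..(shiftS (N + w - 1) x i), g z)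
      = (g 0 * 0 - ∫ z in (0:ℝ)..(0:ℝ), g z)
        + ((∑ i, (g (x i) * x i - ∫ z in (0:ℝ)..(x i), g z))
          - (g (x i₀) * x i₀ - ∫ z in (0:ℝ)..(x i₀), g z)) := by
    have := sum_shift_pair hM
      (fun i => g (shiftS (N + w - 1) x i) * shiftS (N + w - 1) x i
        - ∫ z in (0:ℝ)..(shiftS (N + w - 1) x i), g z)
      (fun i => g (x i) * x i - ∫ z in (0:ℝ)..(x i), g z)
      (fun i hi => by simp only [hsh i hi])
    simpa only [hsh0, hxlast] using this
  -- b_{j+1} = a_j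
  have hba : ∀ (j : ℕ) (hj : j + 1 < N),
      (∑ k, Amat w N ⟨j + 1, hj⟩ k * g (shiftS (N + w - 1) x k))
      = ∑ k, Amat w N ⟨j, by omega⟩ k * g (x k) := by
    intro j hj
    have hAm : ∀ (k : ℕ) (hk : k + 1 < N + w - 1),
        Amat w N ⟨j + 1, hj⟩ ⟨k + 1, hk⟩ = Amat w N ⟨j, by omega⟩ ⟨k, by omega⟩ := by
      intro k hk
      simp only [Amat]
      exact if_congr (by omega) rfl rfl
    have hu0 : Amat w N ⟨j + 1, hj⟩ ⟨0, hM⟩ = 0 := by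
      simp only [Amat]
      rw [if_neg (by omega)]
    have hvlast : Amat w N (⟨j, by omega⟩ : Fin N) ⟨N + w - 1 - 1, by omega⟩ = 0 := by
      simp only [Amat]
      rw [if_neg (by omega)]
    have := sum_shift_pair hM
      (fun k => Amat w N ⟨j + 1, hj⟩ k * g (shiftS (N + w - 1) x k))
      (fun k => Amat w N ⟨j, by omega⟩ k * g (x k))
      (fun k hk => by simp only [hsh k hk, hAm k hk])
    simp only [hu0, hvlast, zero_mul, mul_zero] at this
    linarith
  -- key2 : F sums
  have key2 : (∑ j : Fin N, ∫ z in (0:ℝ)..(∑ k, Amat w N j k * g (shiftS (N + w - 1) x k)), f z)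
      = (∫ z in (0:ℝ)..(∑ k, Amat w N ⟨0, hN0⟩ k * g (shiftS (N + w - 1) x k)), f z)
        + ((∑ j : Fin N, ∫ z in (0:ℝ)..(∑ k, Amat w N j k * g (x k)), f z)
          - ∫ z in (0:ℝ)..(∑ k, Amat w N ⟨N - 1, by omega⟩ k * g (x k)), f z) := by
    exact sum_shift_pair hN0
      (fun j => ∫ z in (0:ℝ)..(∑ k, Amat w N j k * g (shiftS (N + w - 1) x k)), f z)
      (fun j => ∫ z in (0:ℝ)..(∑ k, Amat w N j k * g (x k)), f z)
      (fun j hj => congrArg (fun t => ∫ z in (0:ℝ)..t, f z) (hba j hj))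
  -- weighted bounds
  have haN_nonneg : 0 ≤ ∑ k, Amat w N (⟨N - 1, by omega⟩ : Fin N) k * g (x k) :=
    Finset.sum_nonneg fun k _ => mul_nonneg (Amat_nonneg w N _ k) (hg_maps (hx_mem k)).1
  have haN_le : (∑ k, Amat w N (⟨N - 1, by omega⟩ : Fin N) k * g (x k)) ≤ g (x i₀) := by
    calc (∑ k, Amat w N (⟨N - 1, by omega⟩ : Fin N) k * g (x k))
        ≤ ∑ k, Amat w N (⟨N - 1, by omega⟩ : Fin N) k * g (x i₀) :=
          Finset.sum_le_sum fun k _ =>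
            mul_le_mul_of_nonneg_left (hgmono (hx_mem k) (hx_mem i₀) (hx_le k))
              (Amat_nonneg w N _ k)
      _ = g (x i₀) := by rw [← Finset.sum_mul, Amat_row_sum w N hw hN, one_mul]
  have hb0_ge : g 0 ≤ ∑ k, Amat w N (⟨0, hN0⟩ : Fin N) k * g (shiftS (N + w - 1) x k) := by
    calc g 0 = ∑ k, Amat w N (⟨0, hN0⟩ : Fin N) k * g 0 := by
          rw [← Finset.sum_mul, Amat_row_sum w N hw hN, one_mul]
      _ ≤ _ := Finset.sum_le_sum fun k _ =>
          mul_le_mul_of_nonneg_left (hgmono hx0 (hSx_mem k) (hSx_mem k).1)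
            (Amat_nonneg w N _ k)
  have hb0_le : (∑ k, Amat w N (⟨0, hN0⟩ : Fin N) k * g (shiftS (N + w - 1) x k)) ≤ ymax := by
    calc (∑ k, Amat w N (⟨0, hN0⟩ : Fin N) k * g (shiftS (N + w - 1) x k))
        ≤ ∑ k, Amat w N (⟨0, hN0⟩ : Fin N) k * ymax :=
          Finset.sum_le_sum fun k _ =>
            mul_le_mul_of_nonneg_left (hg_maps (hSx_mem k)).2 (Amat_nonneg w N _ k)
      _ = ymax := by rw [← Finset.sum_mul, Amat_row_sum w N hw hN, one_mul]
  have hF1 : (∫ z in (0:ℝ)..(∑ k, Amat w N (⟨N - 1, by omega⟩ : Fin N) k * g (x k)), f z)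
      ≤ ∫ z in (0:ℝ)..(g (x i₀)), f z := hFmono _ _ haN_nonneg haN_le hgi.2
  have hF2 : (∫ z in (0:ℝ)..(g 0), f z)
      ≤ ∫ z in (0:ℝ)..(∑ k, Amat w N (⟨0, hN0⟩ : Fin N) k * g (shiftS (N + w - 1) x k)), f z :=
    hFmono _ _ hg0.1 hb0_ge hb0_le
  have hint0 : (∫ z in (0:ℝ)..(0:ℝ), g z) = 0 := intervalIntegral.integral_same
  simp only [Uc]
  rw [key1, key2, hUs, hUs]
  rw [hint0]
  linarith
end

section
/- Let n and t be integers with 2 ≤ t ≤ ⌊(n−1)/2⌋. Then the function P satisfies P'(x) < 0 for all x ∈ (0, (t−1)/(n−2)), and P''(x) ≥ 0 for all x ∈ [(t−1)/(n−2), 1). -/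
/-!
Since `g` is the upper tail of a binomial distribution, its derivative telescopes to a single
Bernstein term, `g' = K x^(t-1) (1-x)^(n-1-t)` with `K > 0`. The fundamental theorem of calculus
gives `P' = g - x g'` and hence `P'' = -x g''`, where `g''` has the sign of `(t-1) - (n-2) x`.
So `P'` vanishes at `0` and strictly decreases on `[0, (t-1)/(n-2)]`, and `P'' ≥ 0` beyond the
mode `(t-1)/(n-2)` of `g'`.
-/

open Polynomial

theorem derivative_sum_bernsteinPolynomial_Icc {R : Type*} [CommRing R] {N t : ℕ} (ht : t ≤ N) :
    derivative (∑ i ∈ Finset.Icc (t + 1) (N + 1), bernsteinPolynomial R (N + 1) i)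
      = (N + 1) * bernsteinPolynomial R N t := by
  rw [← Finset.map_add_right_Icc, Finset.sum_map, derivative_sum]
  simp only [addRightEmbedding_apply, bernsteinPolynomial.derivative_succ_aux, ← Finset.mul_sum]
  rw [← neg_inj, ← mul_neg, ← Finset.sum_neg_distrib]
  simp only [neg_sub]
  rw [Finset.sum_Icc_sub ht, bernsteinPolynomial.eq_zero_of_lt R (Nat.lt_succ_self N)]
  ring

noncomputable def binomialTail (N t : ℕ) (x : ℝ) : ℝ :=
  ∑ i ∈ Finset.Icc t N, (N.choose i : ℝ) * x ^ i * (1 - x) ^ (N - i)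

theorem binomialTail_zero (N : ℕ) {t : ℕ} (ht : t ≠ 0) : binomialTail N t 0 = 0 :=
  Finset.sum_eq_zero fun i hi => by simp [zero_pow (by grind : i ≠ 0)]

theorem hasDerivAt_binomialTail {N t : ℕ} (ht : t ≤ N) (x : ℝ) :
    HasDerivAt (binomialTail (N + 1) (t + 1))
      ((N + 1) * N.choose t * (x ^ t * (1 - x) ^ (N - t))) x := by
  have h := (∑ i ∈ Finset.Icc (t + 1) (N + 1), bernsteinPolynomial ℝ (N + 1) i).hasDerivAt x
  rw [derivative_sum_bernsteinPolynomial_Icc ht] at h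
  have hfun : binomialTail (N + 1) (t + 1)
      = fun y => (∑ i ∈ Finset.Icc (t + 1) (N + 1), bernsteinPolynomial ℝ (N + 1) i).eval y :=
    funext fun y => by simp [binomialTail, eval_finsetSum, bernsteinPolynomial]
  rw [hfun]
  exact h.congr_deriv (by simp [bernsteinPolynomial, mul_assoc])

theorem hasDerivAt_pow_mul_one_sub_pow (a b : ℕ) (x : ℝ) :
    HasDerivAt (fun x : ℝ => x ^ (a + 1) * (1 - x) ^ (b + 1))
      (x ^ a * (1 - x) ^ b * ((a + 1) - (a + b + 2) * x)) x := by
  refine (((hasDerivAt_id' x).fun_pow (a + 1)).fun_mul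
    (((hasDerivAt_id' x).const_sub 1).fun_pow (b + 1))).congr_deriv ?_
  simp only [Nat.add_sub_cancel]
  push_cast
  ring

theorem pow_mul_one_sub_pow_mul_pos {a b : ℕ} {x : ℝ} (hx : 0 < x)
    (hxm : x < (a + 1) / (a + b + 2)) :
    0 < x ^ a * (1 - x) ^ b * ((a + 1) - (a + b + 2) * x) := by
  have hlt : x * (a + b + 2) < a + 1 := (lt_div_iff₀ (by positivity)).1 hxm
  have hx1 : 0 < 1 - x := by nlinarith
  exact mul_pos (by positivity) (by linarith)

theorem pow_mul_one_sub_pow_mul_nonpos {a b : ℕ} {x : ℝ} (hmx : (a + 1) / (a + b + 2) ≤ x)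
    (hx1 : x < 1) :
    x ^ a * (1 - x) ^ b * ((a + 1) - (a + b + 2) * x) ≤ 0 := by
  have hx0 : 0 < x := lt_of_lt_of_le (by positivity) hmx
  have hle : a + 1 ≤ x * (a + b + 2) := (div_le_iff₀ (by positivity)).1 hmx
  have hx1' : 0 < 1 - x := by linarith
  exact mul_nonpos_of_nonneg_of_nonpos (by positivity) (by linarith)

section TrialEntropy

variable {g g' g'' : ℝ → ℝ}

theorem deriv_two_integral_sub_mul (hg : ∀ x, HasDerivAt g (g' x) x) :
    deriv (fun x => 2 * (∫ z in (0:ℝ)..x, g z) - x * g x) = fun x => g x - x * g' x := by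
  have hcont : Continuous g := continuous_iff_continuousAt.2 fun x => (hg x).continuousAt
  refine funext fun x => HasDerivAt.deriv ?_
  refine (((hcont.integral_hasStrictDerivAt 0 x).hasDerivAt.const_mul 2).fun_sub
    ((hasDerivAt_id' x).fun_mul (hg x))).congr_deriv ?_
  ring

theorem hasDerivAt_deriv_two_integral_sub_mul (hg : ∀ x, HasDerivAt g (g' x) x)
    (hg' : ∀ x, HasDerivAt g' (g'' x) x) (x : ℝ) :
    HasDerivAt (deriv fun x => 2 * (∫ z in (0:ℝ)..x, g z) - x * g x) (-(x * g'' x)) x := by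
  rw [deriv_two_integral_sub_mul hg]
  exact ((hg x).fun_sub ((hasDerivAt_id' x).fun_mul (hg' x))).congr_deriv (by ring)

end TrialEntropy

/-- **Lemma (P'x & P''x).** For integers `n, t` with `2 ≤ t ≤ ⌊(n−1)/2⌋`, with
`g(x) = Σ_{i=t}^{n−1} C(n−1,i) xⁱ (1−x)^{n−1−i}` and the trial entropy
`P(x) = 2∫₀ˣ g(z) dz − x·g(x)`, one has `P'(x) < 0` for all
`x ∈ (0, (t−1)/(n−2))` and `P''(x) ≥ 0` for all `x ∈ [(t−1)/(n−2), 1)`. -/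
theorem stmt_19
    (n t : ℕ) (ht : 2 ≤ t) (htn : t ≤ (n - 1) / 2)
    (g : ℝ → ℝ)
    (hg : ∀ x : ℝ, g x
        = ∑ i ∈ Finset.Icc t (n - 1), ((n - 1).choose i : ℝ) * x ^ i * (1 - x) ^ (n - 1 - i))
    (P : ℝ → ℝ)
    (hP : ∀ x : ℝ, P x = 2 * (∫ z in (0:ℝ)..x, g z) - x * g x) :
    (∀ x ∈ Set.Ioo (0:ℝ) (((t : ℝ) - 1) / ((n : ℝ) - 2)), deriv P x < 0)
    ∧ (∀ x ∈ Set.Ico (((t : ℝ) - 1) / ((n : ℝ) - 2)) (1:ℝ), 0 ≤ deriv (deriv P) x) := by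
  obtain ⟨a, rfl⟩ : ∃ a, t = a + 2 := ⟨t - 2, by omega⟩
  obtain ⟨b, rfl⟩ : ∃ b, n = a + b + 4 := ⟨n - a - 4, by omega⟩
  obtain rfl : g = binomialTail (a + b + 2 + 1) (a + 1 + 1) := funext hg
  obtain rfl := funext hP
  set K : ℝ := (((a + b + 2 : ℕ) : ℝ) + 1) * (a + b + 2).choose (a + 1)
  have hK : 0 < K := by
    have := Nat.choose_pos (n := a + b + 2) (k := a + 1) (by omega)
    positivity
  have hg' := hasDerivAt_binomialTail (N := a + b + 2) (t := a + 1) (by omega)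
  rw [show a + b + 2 - (a + 1) = b + 1 by omega] at hg'
  have hP'' := hasDerivAt_deriv_two_integral_sub_mul hg'
    fun x => (hasDerivAt_pow_mul_one_sub_pow a b x).const_mul K
  have hm : (((a + 2 : ℕ) : ℝ) - 1) / (((a + b + 4 : ℕ) : ℝ) - 2) = (a + 1) / (a + b + 2) := by
    push_cast; ring_nf
  rw [hm]
  refine ⟨fun x hx => ?_, fun x ⟨hmx, hx1⟩ => ?_⟩
  · have hanti := strictAntiOn_of_deriv_neg (convex_Icc (0 : ℝ) ((a + 1) / (a + b + 2)))
      (fun y _ => (hP'' y).continuousAt.continuousWithinAt) fun y hy => by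
        rw [interior_Icc] at hy
        rw [(hP'' y).deriv, neg_lt_zero, ← mul_assoc]
        exact mul_pos (mul_pos hy.1 hK) (pow_mul_one_sub_pow_mul_pos hy.1 hy.2)
    have hP'0 := congrFun (deriv_two_integral_sub_mul hg') 0
    rw [zero_mul, sub_zero, binomialTail_zero _ (by omega)] at hP'0
    simpa [hP'0] using hanti ⟨le_rfl, hx.1.le.trans hx.2.le⟩ (Set.Ioo_subset_Icc_self hx) hx.1
  · rw [(hP'' x).deriv, neg_nonneg, ← mul_assoc]
    exact mul_nonpos_of_nonneg_of_nonpos (mul_nonneg (lt_of_lt_of_le (by positivity) hmx).le hK.le)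
      (pow_mul_one_sub_pow_mul_nonpos hmx hx1)
end
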